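/- arXiv:1807.02589 — 8 statements merged into one kernel-verified Lean document; each statement's English description precedes it below -/
import Mathlib

section
/- Let d ≥ 1, n ≥ 1, A ∈ ℝ^{d×n} and u ∈ ℝⁿ. The set X*_u of global minimizers of L(x,u) = (1/2)‖Ax‖₂² + ⟨u,x⟩ over the unit sphere { x : ‖x‖₂ = 1 } is a (possibly degenerate) sphere of dimension at most n: there exist a point p ∈ ℝⁿ, a linear subspace V ⊆ ℝⁿ, and a radius r ≥ 0 such that X*_u = { p + w : w ∈ V, ‖w‖₂ = r }. -/
open scoped RealInnerProductSpace

/-- The Lagrangian `L(x,u) = (1/2)‖Ax‖₂² + ⟨u,x⟩`. -/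
noncomputable def lagrangian {d n : ℕ} (A : Matrix (Fin d) (Fin n) ℝ)
    (x u : EuclideanSpace ℝ (Fin n)) : ℝ :=
  (1 / 2) * ‖Matrix.toEuclideanLin A x‖ ^ 2 + ⟪u, x⟫

/-!
Write `L(x, u) = ½⟪Qx, x⟫ + ⟪u, x⟫` with `Q = AᵀA`. If `x₀` minimizes it on the sphere, the
Lagrange multiplier rule gives `μ` with `Qx₀ + u = μx₀`, and on the sphere
`L(y, u) = L(x₀, u) + ½⟪(Q - μ)(y - x₀), y - x₀⟫`. For `⟪v, x₀⟫ ≠ 0` the reflection `y` of `x₀`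
in `vᗮ` makes `y - x₀` a nonzero multiple of `v`, so by continuity `Q - μ` is positive
semidefinite, and `y` is a minimizer iff `(Q - μ)(y - x₀) = 0`. The minimizers thus form the
unit sphere cut by the affine subspace `x₀ + ker (Q - μ)`, a sphere in that subspace centred at
the orthogonal projection of the origin.
-/

open Metric Filter Topology
open scoped InnerProduct

variable {E : Type*} [NormedAddCommGroup E] [InnerProductSpace ℝ E]

theorem ContinuousLinearMap.IsPositive.inner_map_self_eq_zero_iff {M : E →L[ℝ] E}
    (hM : M.IsPositive) (x : E) : ⟪M x, x⟫ = 0 ↔ M x = 0 := by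
  refine ⟨fun hx => ?_, fun hx => by simp [hx]⟩
  have hquad : ∀ t : ℝ, 0 ≤ ⟪M (M x), M x⟫ * (t * t) + 2 * ‖M x‖ ^ 2 * t + 0 := fun t => by
    have hsymm : ⟪M (M x), x⟫ = ⟪M x, M x⟫ := hM.isSymmetric (M x) x
    have := hM.inner_nonneg_left (x + t • M x)
    simp only [map_add, map_smul, inner_add_left, inner_add_right, real_inner_smul_left,
      real_inner_smul_right, hx, hsymm, real_inner_self_eq_norm_sq] at this
    linarith
  have hdiscr := discrim_le_zero hquad
  rw [discrim] at hdiscr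
  have : ‖M x‖ ^ 2 = 0 := by nlinarith [sq_nonneg (‖M x‖ ^ 2)]
  simpa using this

theorem inner_map_self_nonneg_of_inner_ne_zero (M : E →L[ℝ] E) {x₀ : E} (hx₀ : x₀ ≠ 0)
    (h : ∀ v, ⟪v, x₀⟫ ≠ 0 → 0 ≤ ⟪M v, v⟫) (v : E) : 0 ≤ ⟪M v, v⟫ := by
  by_cases hv : ⟪v, x₀⟫ = 0
  · have hcont : Continuous fun ε : ℝ => ⟪M (v + ε • x₀), v + ε • x₀⟫ := by fun_prop
    have hlim : Tendsto (fun ε : ℝ => ⟪M (v + ε • x₀), v + ε • x₀⟫) (𝓝[≠] 0) (𝓝 ⟪M v, v⟫) := by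
      simpa using (hcont.tendsto 0).mono_left nhdsWithin_le_nhds
    refine ge_of_tendsto hlim (eventually_nhdsWithin_of_forall fun ε hε => h _ ?_)
    simpa [inner_add_left, hv, real_inner_smul_left, hx₀] using hε
  · exact h v hv

theorem setOf_norm_eq_and_sub_mem_eq (K : Submodule ℝ E) [K.HasOrthogonalProjection] (x₀ : E) :
    {y | ‖y‖ = ‖x₀‖ ∧ y - x₀ ∈ K} =
      {y | ∃ w ∈ K, ‖w‖ = ‖K.starProjection x₀‖ ∧ y = (x₀ - K.starProjection x₀) + w} := by
  set P := K.starProjection x₀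
  have hP : P ∈ K := K.starProjection_apply_mem x₀
  have hpyth : ∀ w ∈ K, ‖(x₀ - P) + w‖ ^ 2 = ‖x₀ - P‖ ^ 2 + ‖w‖ ^ 2 := fun w hw => by
    rw [norm_add_sq_real, K.starProjection_inner_eq_zero x₀ w hw]; ring
  have hx₀ : ‖x₀‖ ^ 2 = ‖x₀ - P‖ ^ 2 + ‖P‖ ^ 2 := by rw [← hpyth P hP, sub_add_cancel]
  ext y
  constructor
  · rintro ⟨hy, hyK⟩
    have hw : y - (x₀ - P) ∈ K := by convert K.add_mem hyK hP using 1; abel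
    refine ⟨y - (x₀ - P), hw, ?_, by abel⟩
    have := hpyth _ hw
    rw [add_sub_cancel, hy, hx₀] at this
    exact (sq_eq_sq₀ (norm_nonneg _) (norm_nonneg _)).1 (by linarith)
  · rintro ⟨w, hw, hwP, rfl⟩
    refine ⟨(sq_eq_sq₀ (norm_nonneg _) (norm_nonneg _)).1 ?_, ?_⟩
    · rw [hpyth w hw, hwP, hx₀]
    · convert K.sub_mem hw hP using 1; abel

noncomputable def quadraticObjective (Q : E →L[ℝ] E) (u x : E) : ℝ :=
  (1 / 2) * ⟪Q x, x⟫ + ⟪u, x⟫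

section QuadraticObjective

variable {Q : E →L[ℝ] E} {u x₀ : E}

theorem quadraticObjective_add (hQ : Q.IsSymmetric) (u x z : E) :
    quadraticObjective Q u (x + z) =
      quadraticObjective Q u x + ⟪Q x + u, z⟫ + (1 / 2) * ⟪Q z, z⟫ := by
  have hsymm : ⟪Q z, x⟫ = ⟪Q x, z⟫ := by rw [real_inner_comm]; exact (hQ x z).symm
  simp only [quadraticObjective, map_add, inner_add_left, inner_add_right, hsymm]
  ring

theorem hasStrictFDerivAt_quadraticObjective (hQ : Q.IsSymmetric) (u x : E) :
    HasStrictFDerivAt (quadraticObjective Q u) (innerSL ℝ (Q x + u)) x := by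
  have h := (((Q.hasStrictFDerivAt).inner ℝ (hasStrictFDerivAt_id x)).const_mul (1 / 2)).add
    (innerSL ℝ u).hasStrictFDerivAt
  refine h.congr_fderiv ?_
  ext v
  have hsymm : ⟪Q v, x⟫ = ⟪Q x, v⟫ := by rw [real_inner_comm]; exact (hQ x v).symm
  simp only [add_apply, smul_apply, ContinuousLinearMap.comp_apply, ContinuousLinearMap.prod_apply,
    ContinuousLinearMap.id_apply, fderivInnerCLM_apply, coe_innerSL_apply, id_eq, hsymm,
    smul_eq_mul, inner_add_left]
  ring

theorem exists_eq_smul_of_isMinOn_sphere [CompleteSpace E] (hQ : Q.IsSymmetric)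
    (hx₀ : x₀ ≠ 0) (hmin : IsMinOn (quadraticObjective Q u) (sphere 0 ‖x₀‖) x₀) :
    ∃ μ : ℝ, Q x₀ + u = μ • x₀ := by
  have hsphere : sphere (0 : E) ‖x₀‖ = {x | ‖x‖ ^ 2 = ‖x₀‖ ^ 2} := by
    ext x; simp
  obtain ⟨a, b, hab, hlin⟩ := IsLocalExtrOn.exists_multipliers_of_hasStrictFDerivAt_1d
      (Or.inl (hsphere ▸ hmin).localize) (hasStrictFDerivAt_norm_sq x₀)
      (hasStrictFDerivAt_quadraticObjective hQ u x₀)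
  have hlin' : ∀ v, a * (2 * ⟪x₀, v⟫) + b * ⟪Q x₀ + u, v⟫ = 0 := fun v => by
    simpa [inner_add_left, mul_add] using congr($hlin v)
  have hb : b ≠ 0 := by
    rintro rfl
    have ha : a ≠ 0 := by simpa using hab
    have := hlin' x₀
    simp [ha, hx₀] at this
  refine ⟨-2 * a / b, ext_inner_right ℝ fun v => ?_⟩
  rw [real_inner_smul_left]
  field_simp
  linarith [hlin' v]

theorem quadraticObjective_eq_of_norm_eq (hQ : Q.IsSymmetric) {μ : ℝ}
    (hμ : Q x₀ + u = μ • x₀) {y : E} (hy : ‖y‖ = ‖x₀‖) :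
    quadraticObjective Q u y =
      quadraticObjective Q u x₀ + (1 / 2) * ⟪(Q - μ • 1) (y - x₀), y - x₀⟫ := by
  obtain ⟨z, rfl⟩ : ∃ z, y = x₀ + z := ⟨y - x₀, by abel⟩
  have hnorm := norm_add_sq_real x₀ z
  rw [hy] at hnorm
  rw [quadraticObjective_add hQ, add_sub_cancel_left, hμ]
  simp only [sub_apply, smul_apply, one_apply_eq_self, inner_sub_left, real_inner_smul_left,
    real_inner_self_eq_norm_sq]
  linear_combination (-μ / 2) * hnorm

theorem isPositive_sub_smul_one_of_isMinOn_sphere (hQ : Q.IsSymmetric) {μ : ℝ}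
    (hμ : Q x₀ + u = μ • x₀) (hx₀ : x₀ ≠ 0)
    (hmin : IsMinOn (quadraticObjective Q u) (sphere 0 ‖x₀‖) x₀) :
    (Q - μ • 1).IsPositive := by
  have hsymm : (Q - μ • 1 : E →L[ℝ] E).IsSymmetric := fun x y => by
    simpa [inner_sub_left, inner_sub_right, real_inner_smul_left, real_inner_smul_right]
      using hQ x y
  refine (ContinuousLinearMap.isPositive_iff _).2
    ⟨hsymm, inner_map_self_nonneg_of_inner_ne_zero _ hx₀ fun v hv => ?_⟩
  have hv0 : v ≠ 0 := by rintro rfl; simp at hv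
  set y := (ℝ ∙ v)ᗮ.reflection x₀
  have hy : y - x₀ = (-2 * (⟪v, x₀⟫ / ‖v‖ ^ 2)) • v := by
    simp only [y, Submodule.reflection_orthogonal_apply, Submodule.reflection_singleton_apply]
    simp only [RCLike.ofReal_real_eq_id, id]
    module
  have hnorm : ‖y‖ = ‖x₀‖ := ((ℝ ∙ v)ᗮ.reflection).norm_map x₀
  have hle : quadraticObjective Q u x₀ ≤ quadraticObjective Q u y :=
    hmin (mem_sphere_zero_iff_norm.2 hnorm)
  rw [quadraticObjective_eq_of_norm_eq hQ hμ hnorm, hy] at hle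
  simp only [map_smul, real_inner_smul_left, real_inner_smul_right] at hle
  have hc : 0 < 2 * (⟪v, x₀⟫ / ‖v‖ ^ 2) ^ 2 := by positivity
  exact nonneg_of_mul_nonneg_right (by linarith) hc

theorem exists_isMinOn_sphere_iff [CompleteSpace E] (hQ : Q.IsSymmetric) (hx₀ : x₀ ≠ 0)
    (hmin : IsMinOn (quadraticObjective Q u) (sphere 0 ‖x₀‖) x₀) :
    ∃ μ : ℝ, ∀ y, ‖y‖ = ‖x₀‖ →
      (IsMinOn (quadraticObjective Q u) (sphere 0 ‖x₀‖) y ↔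
        (Q - μ • 1 : E →L[ℝ] E) (y - x₀) = 0) := by
  obtain ⟨μ, hμ⟩ := exists_eq_smul_of_isMinOn_sphere hQ hx₀ hmin
  have hpos := isPositive_sub_smul_one_of_isMinOn_sphere hQ hμ hx₀ hmin
  refine ⟨μ, fun y hy => ?_⟩
  have hx₀mem : x₀ ∈ sphere (0 : E) ‖x₀‖ := mem_sphere_zero_iff_norm.2 rfl
  calc IsMinOn (quadraticObjective Q u) (sphere 0 ‖x₀‖) y
      ↔ quadraticObjective Q u y ≤ quadraticObjective Q u x₀ :=
        ⟨fun h => h hx₀mem, fun h _ hw => h.trans (hmin hw)⟩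
    _ ↔ ⟪(Q - μ • 1) (y - x₀), y - x₀⟫ = 0 := by
        rw [quadraticObjective_eq_of_norm_eq hQ hμ hy]
        constructor
        · intro h; linarith [hpos.inner_nonneg_left (y - x₀)]
        · intro h; rw [h]; simp
    _ ↔ (Q - μ • 1 : E →L[ℝ] E) (y - x₀) = 0 := hpos.inner_map_self_eq_zero_iff _

theorem exists_setOf_isMinOn_sphere_eq [CompleteSpace E] (hQ : Q.IsSymmetric) (u : E) :
    ∃ (p : E) (V : Submodule ℝ E) (r : ℝ), 0 ≤ r ∧
      {x | ‖x‖ = 1 ∧ IsMinOn (quadraticObjective Q u) (sphere 0 1) x} =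
        {x | ∃ w ∈ V, ‖w‖ = r ∧ x = p + w} := by
  by_cases hne : ∃ x₀, ‖x₀‖ = 1 ∧ IsMinOn (quadraticObjective Q u) (sphere 0 1) x₀
  · obtain ⟨x₀, hx₀, hmin⟩ := hne
    rw [← hx₀] at hmin ⊢
    obtain ⟨μ, hiff⟩ := exists_isMinOn_sphere_iff hQ (norm_ne_zero_iff.1 (by simp [hx₀])) hmin
    set K := (Q - μ • 1 : E →L[ℝ] E).ker
    have : CompleteSpace K := (Q - μ • 1 : E →L[ℝ] E).isClosed_ker.completeSpace_coe
    refine ⟨x₀ - K.starProjection x₀, K, ‖K.starProjection x₀‖, norm_nonneg _, ?_⟩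
    rw [← setOf_norm_eq_and_sub_mem_eq]
    ext y
    exact and_congr_right fun hy => hiff y hy
  · -- no minimizer: the sphere of radius `1` in `⊥` is empty too
    refine ⟨0, ⊥, 1, zero_le_one, ?_⟩
    ext x
    simp only [Set.mem_ofPred_eq, Submodule.mem_bot, exists_eq_left, norm_zero, zero_ne_one,
      false_and, iff_false]
    exact fun hx => hne ⟨x, hx⟩

end QuadraticObjective

theorem quadraticObjective_adjoint_comp_self {F : Type*} [NormedAddCommGroup F]
    [InnerProductSpace ℝ F] [CompleteSpace E] [CompleteSpace F] (T : E →L[ℝ] F) (u x : E) :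
    quadraticObjective (T† ∘L T) u x = (1 / 2) * ‖T x‖ ^ 2 + ⟪u, x⟫ := by
  rw [quadraticObjective, ContinuousLinearMap.comp_apply, ContinuousLinearMap.adjoint_inner_left,
    real_inner_self_eq_norm_sq]

theorem minimizer_set_is_sphere_general (d n : ℕ)
    (A : Matrix (Fin d) (Fin n) ℝ) (u : EuclideanSpace ℝ (Fin n)) :
    ∃ (p : EuclideanSpace ℝ (Fin n)) (V : Submodule ℝ (EuclideanSpace ℝ (Fin n))) (r : ℝ),
      0 ≤ r ∧
      {x : EuclideanSpace ℝ (Fin n) | ‖x‖ = 1 ∧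
          ∀ y : EuclideanSpace ℝ (Fin n), ‖y‖ = 1 → lagrangian A x u ≤ lagrangian A y u}
        = {x : EuclideanSpace ℝ (Fin n) | ∃ w ∈ V, ‖w‖ = r ∧ x = p + w} := by
  set T := LinearMap.toContinuousLinearMap (Matrix.toEuclideanLin A)
  have hL : ∀ x, lagrangian A x u = quadraticObjective (T† ∘L T) u x := fun x => by
    rw [quadraticObjective_adjoint_comp_self]; rfl
  obtain ⟨p, V, r, hr, hset⟩ := exists_setOf_isMinOn_sphere_eq
    (ContinuousLinearMap.isPositive_adjoint_comp_self T).isSymmetric u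
  refine ⟨p, V, r, hr, ?_⟩
  rw [← hset]
  simp only [hL, isMinOn_iff, mem_sphere_zero_iff_norm]

/-- The set `X*_u` of global minimizers of `x ↦ L(x,u)` over the Euclidean unit sphere
is a (possibly degenerate) sphere: there are a point `p`, a linear subspace `V`, and a
radius `r ≥ 0` such that `X*_u = {p + w : w ∈ V, ‖w‖ = r}`. -/
theorem minimizer_set_is_sphere (d n : ℕ) (hd : 1 ≤ d) (hn : 1 ≤ n)
    (A : Matrix (Fin d) (Fin n) ℝ) (u : EuclideanSpace ℝ (Fin n)) :
    ∃ (p : EuclideanSpace ℝ (Fin n)) (V : Submodule ℝ (EuclideanSpace ℝ (Fin n))) (r : ℝ),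
      0 ≤ r ∧
      {x : EuclideanSpace ℝ (Fin n) | ‖x‖ = 1 ∧
          ∀ y : EuclideanSpace ℝ (Fin n), ‖y‖ = 1 → lagrangian A x u ≤ lagrangian A y u}
        = {x : EuclideanSpace ℝ (Fin n) | ∃ w ∈ V, ‖w‖ = r ∧ x = p + w} :=
  minimizer_set_is_sphere_general d n A u
end

section
/- (Brickman's theorem.) Let n ≥ 3 and let Q₁ and Q₂ be real symmetric n×n matrices. Then the image of the Euclidean unit sphere under the pair of quadratic forms, i.e. the set { (xᵀQ₁x, xᵀQ₂x) ∈ ℝ² : x ∈ ℝⁿ, ‖x‖₂ = 1 }, is a convex subset of ℝ². -/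
/-!
Take unit vectors `x`, `y` with images `a ≠ b`. The unit vectors whose image lies on the line
through `a` and `b` are the unit isotropic vectors `Z` of a symmetric pencil
`A = α A₁ + β A₂ + γ id`, and `x, y ∈ Z`. If `x` is joined inside `Z` to `y` or to `-y` (which has
the same image), the image of that path is a connected subset of the line containing `a` and `b`,
hence contains the segment between them.

In an eigenbasis of `A`, `Z` is the preimage under `w ↦ (wᵢ²)ᵢ` of the convex set `Δ` of
probability vectors `p` with `∑ λᵢ pᵢ = 0`. Paths in `Δ` lift to `Z` with any fixed sign pattern,
and the sign of the `i`-th coordinate can be flipped whenever some point of `Δ` has `pᵢ = 0`.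
When there are at least three coordinates this fails for at most one of them, so every point of
`Z`, up to sign, is joined to the all-positive lift of its squares.
-/

open scoped RealInnerProductSpace
open Matrix Set

variable {ι : Type*}

section DecidableEq

variable [DecidableEq ι]

noncomputable def signedSqrt (N : Finset ι) (p : ι → ℝ) : EuclideanSpace ℝ ι :=
  WithLp.toLp 2 fun i => if i ∈ N then -√(p i) else √(p i)

theorem continuous_signedSqrt (N : Finset ι) : Continuous (signedSqrt N) := by
  refine (PiLp.continuous_toLp 2 _).comp (continuous_pi fun i => ?_)
  split_ifs <;> fun_prop

theorem signedSqrt_apply_sq {N : Finset ι} {p : ι → ℝ} (hp : ∀ i, 0 ≤ p i) (i : ι) :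
    signedSqrt N p i ^ 2 = p i := by
  simp only [signedSqrt]
  split_ifs <;> simp [Real.sq_sqrt (hp i)]

theorem signedSqrt_insert_of_eq_zero {N : Finset ι} {s : ι → ℝ} {i : ι} (hs : s i = 0) :
    signedSqrt (insert i N) s = signedSqrt N s := by
  ext m
  by_cases hm : m = i
  · subst hm; simp [signedSqrt, hs]
  · simp [signedSqrt, hm]

end DecidableEq

variable [Fintype ι] {d : ι → ℝ}

def balancedSimplex (d : ι → ℝ) : Set (ι → ℝ) :=
  stdSimplex ℝ ι ∩ {p | d ⬝ᵥ p = 0}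

def diagUnitIsotropic (d : ι → ℝ) : Set (EuclideanSpace ℝ ι) :=
  {w | (fun i => w i ^ 2) ∈ balancedSimplex d}

theorem convex_balancedSimplex (d : ι → ℝ) : Convex ℝ (balancedSimplex d) :=
  (convex_stdSimplex ℝ ι).inter <|
    convex_hyperplane ⟨dotProduct_add d, fun c p => dotProduct_smul c d p⟩ 0

theorem balancedSimplex_neg : balancedSimplex (-d) = balancedSimplex d := by
  ext p
  simp [balancedSimplex, neg_dotProduct]

theorem exists_nonpos_of_mem_balancedSimplex {p : ι → ℝ} (hp : p ∈ balancedSimplex d) :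
    ∃ i, d i ≤ 0 := by
  by_contra! hpos
  obtain ⟨⟨hp0, hp1⟩, hdp⟩ := hp
  obtain ⟨i, -, hi⟩ : ∃ i ∈ Finset.univ, (0 : ι → ℝ) i < p i :=
    Finset.exists_lt_of_sum_lt (by simp [hp1])
  have : 0 < d ⬝ᵥ p := Finset.sum_pos' (fun j _ => mul_nonneg (hpos j).le (hp0 j))
    ⟨i, Finset.mem_univ i, mul_pos (hpos i) hi⟩
  exact this.ne' hdp

theorem neg_mem_diagUnitIsotropic {w : EuclideanSpace ℝ ι} (hw : w ∈ diagUnitIsotropic d) :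
    -w ∈ diagUnitIsotropic d := by
  simpa [diagUnitIsotropic] using hw

theorem JoinedIn.neg_of_diagUnitIsotropic {u v : EuclideanSpace ℝ ι}
    (h : JoinedIn (diagUnitIsotropic d) u v) : JoinedIn (diagUnitIsotropic d) (-u) (-v) :=
  (h.map continuous_neg).mono <| by rintro _ ⟨w, hw, rfl⟩; exact neg_mem_diagUnitIsotropic hw

variable [DecidableEq ι]

theorem exists_mem_balancedSimplex_apply_eq_zero {i j k : ι} (hj : j ≠ i) (hk : k ≠ i)
    (hdj : d j ≤ 0) (hdk : 0 ≤ d k) : ∃ s ∈ balancedSimplex d, s i = 0 := by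
  let edge : ℝ → ι → ℝ :=
    AffineMap.lineMap (Pi.single j 1 : ι → ℝ) (Pi.single k 1 : ι → ℝ)
  have hcont : ContinuousOn (fun t => d ⬝ᵥ edge t) (Icc 0 1) :=
    (continuous_const.dotProduct AffineMap.lineMap_continuous).continuousOn
  obtain ⟨t, ht, hzero⟩ := intermediate_value_Icc zero_le_one hcont
    (by simpa [edge, dotProduct_single] using And.intro hdj hdk)
  refine ⟨edge t, ⟨(convex_stdSimplex ℝ ι).lineMap_mem (single_mem_stdSimplex ℝ j)
    (single_mem_stdSimplex ℝ k) ht, hzero⟩, ?_⟩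
  simp [edge, AffineMap.lineMap_apply, hj.symm, hk.symm]

theorem forall_ne_pos_or_forall_ne_neg {i : ι} (hi : ¬∃ s ∈ balancedSimplex d, s i = 0) :
    (∀ j ≠ i, 0 < d j) ∨ (∀ j ≠ i, d j < 0) := by
  by_contra! h
  obtain ⟨⟨j, hj, hdj⟩, ⟨k, hk, hdk⟩⟩ := h
  exact hi (exists_mem_balancedSimplex_apply_eq_zero hj hk hdj hdk)

theorem exists_mem_balancedSimplex_apply_eq_zero_of_ne (hι : 3 ≤ Fintype.card ι)
    (hne : (balancedSimplex d).Nonempty) {i j : ι} (hi : ¬∃ s ∈ balancedSimplex d, s i = 0)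
    (hji : j ≠ i) : ∃ s ∈ balancedSimplex d, s j = 0 := by
  obtain ⟨m, hmi, hmj⟩ := ENat.exists_ne_ne_of_three_le
    (by simpa [ENat.card_eq_coe_fintype_card] using hι) i j
  suffices key : ∀ d' : ι → ℝ, balancedSimplex d' = balancedSimplex d → (∀ k ≠ i, 0 < d' k) →
      ∃ s ∈ balancedSimplex d, s j = 0 by
    rcases forall_ne_pos_or_forall_ne_neg hi with hpos | hneg
    · exact key d rfl hpos
    · exact key (-d) balancedSimplex_neg fun k hk => neg_pos.mpr (hneg k hk)
  intro d' hd' hpos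
  obtain ⟨p, hp⟩ := hne
  obtain ⟨l, hl⟩ := exists_nonpos_of_mem_balancedSimplex (hd' ▸ hp)
  obtain rfl : l = i := by_contra fun h => (hpos l h).not_ge hl
  rw [← hd']
  exact exists_mem_balancedSimplex_apply_eq_zero hji.symm hmj hl (hpos m hmi).le

theorem signedSqrt_mem_diagUnitIsotropic (N : Finset ι) {p : ι → ℝ}
    (hp : p ∈ balancedSimplex d) : signedSqrt N p ∈ diagUnitIsotropic d := by
  simpa [diagUnitIsotropic, signedSqrt_apply_sq hp.1.1] using hp

theorem signedSqrt_filter_neg_sq_eq_self (w : EuclideanSpace ℝ ι) :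
    signedSqrt {i | w i < 0} (fun i => w i ^ 2) = w := by
  ext i
  simp only [signedSqrt, Real.sqrt_sq_eq_abs, Finset.mem_filter, Finset.mem_univ, true_and]
  split_ifs with h
  · rw [abs_of_neg h, neg_neg]
  · rw [abs_of_nonneg (not_lt.mp h)]

theorem joinedIn_signedSqrt (N : Finset ι) {p r : ι → ℝ} (hp : p ∈ balancedSimplex d)
    (hr : r ∈ balancedSimplex d) :
    JoinedIn (diagUnitIsotropic d) (signedSqrt N p) (signedSqrt N r) :=
  (((convex_balancedSimplex d).isPathConnected ⟨p, hp⟩).joinedIn p hp r hr).map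
    (continuous_signedSqrt N) |>.mono <| by
      rintro _ ⟨q, hq, rfl⟩
      exact signedSqrt_mem_diagUnitIsotropic N hq

theorem joinedIn_signedSqrt_insert {N : Finset ι} {p : ι → ℝ} {i : ι}
    (hi : ∃ s ∈ balancedSimplex d, s i = 0) (hp : p ∈ balancedSimplex d) :
    JoinedIn (diagUnitIsotropic d) (signedSqrt (insert i N) p) (signedSqrt N p) := by
  obtain ⟨s, hs, hsi⟩ := hi
  have h := joinedIn_signedSqrt (insert i N) hp hs
  rw [signedSqrt_insert_of_eq_zero hsi] at h
  exact h.trans (joinedIn_signedSqrt N hs hp)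

theorem joinedIn_signedSqrt_empty {N : Finset ι} {p : ι → ℝ}
    (hN : ∀ i ∈ N, ∃ s ∈ balancedSimplex d, s i = 0) (hp : p ∈ balancedSimplex d) :
    JoinedIn (diagUnitIsotropic d) (signedSqrt N p) (signedSqrt ∅ p) := by
  induction N using Finset.induction_on with
  | empty => exact JoinedIn.refl (signedSqrt_mem_diagUnitIsotropic ∅ hp)
  | insert i N _ ih =>
    exact (joinedIn_signedSqrt_insert (hN i (Finset.mem_insert_self i N)) hp).trans
      (ih fun j hj => hN j (Finset.mem_insert_of_mem hj))

theorem joinedIn_signedSqrt_empty_of_neg {w : EuclideanSpace ℝ ι}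
    (hw : w ∈ diagUnitIsotropic d) (h : ∀ i, w i < 0 → ∃ s ∈ balancedSimplex d, s i = 0) :
    JoinedIn (diagUnitIsotropic d) w (signedSqrt ∅ fun i => w i ^ 2) := by
  have := joinedIn_signedSqrt_empty (N := {i | w i < 0}) (by simpa using h) hw
  rwa [signedSqrt_filter_neg_sq_eq_self] at this

/-- If some negative coordinate of `w` cannot change sign, every positive one can, and then `-w`
is joined to the all-positive point. -/
theorem joinedIn_signedSqrt_empty_or_neg (hι : 3 ≤ Fintype.card ι) {w : EuclideanSpace ℝ ι}
    (hw : w ∈ diagUnitIsotropic d) :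
    JoinedIn (diagUnitIsotropic d) w (signedSqrt ∅ fun i => w i ^ 2) ∨
      JoinedIn (diagUnitIsotropic d) (-w) (signedSqrt ∅ fun i => w i ^ 2) := by
  by_cases h : ∀ i, w i < 0 → ∃ s ∈ balancedSimplex d, s i = 0
  · exact .inl (joinedIn_signedSqrt_empty_of_neg hw h)
  push Not at h
  obtain ⟨i₀, hi₀, hbad⟩ := h
  right
  simpa using joinedIn_signedSqrt_empty_of_neg (neg_mem_diagUnitIsotropic hw) fun i hi =>
    exists_mem_balancedSimplex_apply_eq_zero_of_ne hι ⟨_, hw⟩ (by simpa using hbad)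
      (by rintro rfl; simp at hi; linarith)

theorem joinedIn_diagUnitIsotropic_or_neg (hι : 3 ≤ Fintype.card ι)
    {u v : EuclideanSpace ℝ ι} (hu : u ∈ diagUnitIsotropic d) (hv : v ∈ diagUnitIsotropic d) :
    JoinedIn (diagUnitIsotropic d) u v ∨ JoinedIn (diagUnitIsotropic d) u (-v) := by
  have huv := joinedIn_signedSqrt ∅ hu hv
  rcases joinedIn_signedSqrt_empty_or_neg hι hu with hu' | hu' <;>
    rcases joinedIn_signedSqrt_empty_or_neg hι hv with hv' | hv'
  · exact .inl (hu'.trans (huv.trans hv'.symm))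
  · exact .inr (hu'.trans (huv.trans hv'.symm))
  · exact .inr (by simpa using (hu'.trans (huv.trans hv'.symm)).neg_of_diagUnitIsotropic)
  · exact .inl (by simpa using (hu'.trans (huv.trans hv'.symm)).neg_of_diagUnitIsotropic)

/-- Through a linear functional separating `a` from `b`, this is the intermediate value
theorem. -/
theorem IsPreconnected.segment_subset_of_subset_line {E : Type*} [NormedAddCommGroup E]
    [NormedSpace ℝ E] {T : Set E} (hT : IsPreconnected T) {a b : E} (ha : a ∈ T) (hb : b ∈ T)
    (hline : T ⊆ line[ℝ, a, b]) : segment ℝ a b ⊆ T := by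
  rcases eq_or_ne a b with rfl | hab
  · simpa using ha
  have hba : ‖b - a‖ ≠ 0 := norm_ne_zero_iff.mpr (sub_ne_zero.mpr hab.symm)
  obtain ⟨g, -, hg⟩ := exists_dual_vector ℝ (b - a) hba
  have hgab : g a ≠ g b := fun h => hba (by simpa [h] using hg.symm)
  have hg_lineMap (t : ℝ) : g (AffineMap.lineMap a b t) = AffineMap.lineMap (g a) (g b) t :=
    g.toLinearMap.toAffineMap.apply_lineMap a b t
  rw [segment_eq_image_lineMap]
  rintro _ ⟨t, ht, rfl⟩
  have hgT : uIcc (g a) (g b) ⊆ g '' T :=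
    (hT.image g g.continuous.continuousOn).ordConnected.uIcc_subset ⟨a, ha, rfl⟩ ⟨b, hb, rfl⟩
  obtain ⟨q, hq, hgq⟩ := hgT <| segment_eq_uIcc (g a) (g b) ▸ hg_lineMap t ▸
    lineMap_mem_segment ℝ (g a) (g b) ht
  obtain ⟨s, rfl⟩ := mem_affineSpan_pair_iff_exists_lineMap_eq.mp (hline hq)
  have hst : s = t :=
    AffineMap.lineMap_injective ℝ hgab ((hg_lineMap s).symm.trans (hgq.trans (hg_lineMap t)))
  rwa [hst] at hq

theorem Prod.mem_affineSpan_pair_of_cross_eq {a b p : ℝ × ℝ} (hab : a ≠ b)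
    (h : (b.1 - a.1) * (p.2 - a.2) = (b.2 - a.2) * (p.1 - a.1)) : p ∈ line[ℝ, a, b] := by
  have hD : (b.1 - a.1) ^ 2 + (b.2 - a.2) ^ 2 ≠ 0 := by
    intro h0
    apply hab
    ext <;> nlinarith [sq_nonneg (b.1 - a.1), sq_nonneg (b.2 - a.2)]
  refine mem_affineSpan_pair_iff_exists_lineMap_eq.mpr
    ⟨((b.1 - a.1) * (p.1 - a.1) + (b.2 - a.2) * (p.2 - a.2)) /
      ((b.1 - a.1) ^ 2 + (b.2 - a.2) ^ 2), ?_⟩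
  ext <;> simp only [AffineMap.lineMap_apply_module', Prod.fst_add, Prod.snd_add, Prod.smul_fst,
    Prod.smul_snd, Prod.fst_sub, Prod.snd_sub, smul_eq_mul] <;> field_simp
  · linear_combination (b.2 - a.2) * h
  · linear_combination -(b.1 - a.1) * h

theorem JoinedIn.segment_subset_image {X E : Type*} [TopologicalSpace X] [NormedAddCommGroup E]
    [NormedSpace ℝ E] {f : X → E} (hf : Continuous f) {S : Set X} {x y : X}
    (h : JoinedIn S x y) (hline : f '' S ⊆ line[ℝ, f x, f y]) :
    segment ℝ (f x) (f y) ⊆ f '' S := by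
  obtain ⟨γ, hγ⟩ := h
  have hrange : range (f ∘ γ) ⊆ f '' S := range_subset_iff.mpr fun t => ⟨γ t, hγ t, rfl⟩
  exact ((isPreconnected_range (hf.comp γ.continuous)).segment_subset_of_subset_line
    ⟨0, by simp⟩ ⟨1, by simp⟩ (hrange.trans hline)).trans hrange

section InnerProductSpace

variable {E : Type*} [NormedAddCommGroup E] [InnerProductSpace ℝ E]

def unitIsotropic (A : E →ₗ[ℝ] E) : Set E := {x | ‖x‖ = 1 ∧ ⟪x, A x⟫ = 0}

variable [FiniteDimensional ℝ E] {A : E →ₗ[ℝ] E} {n : ℕ}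

theorem LinearMap.IsSymmetric.inner_map_self_eq_sum (hA : A.IsSymmetric)
    (hn : Module.finrank ℝ E = n) (x : E) :
    ⟪x, A x⟫ = ∑ i, hA.eigenvalues hn i * (hA.eigenvectorBasis hn).repr x i ^ 2 := by
  rw [← (hA.eigenvectorBasis hn).repr.inner_map_map, PiLp.inner_apply]
  refine Finset.sum_congr rfl fun i _ => ?_
  simp [hA.eigenvectorBasis_apply_self_apply]
  ring

theorem LinearMap.IsSymmetric.repr_mem_diagUnitIsotropic_iff (hA : A.IsSymmetric)
    (hn : Module.finrank ℝ E = n) {x : E} :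
    (hA.eigenvectorBasis hn).repr x ∈ diagUnitIsotropic (hA.eigenvalues hn) ↔
      x ∈ unitIsotropic A := by
  have hnorm : ∑ i, (hA.eigenvectorBasis hn).repr x i ^ 2 = ‖x‖ ^ 2 := by
    rw [← EuclideanSpace.real_norm_sq_eq, LinearIsometryEquiv.norm_map]
  simp only [diagUnitIsotropic, balancedSimplex, stdSimplex, mem_inter_iff, mem_ofPred_eq,
    dotProduct, hnorm, ← hA.inner_map_self_eq_sum hn, unitIsotropic]
  simp [pow_eq_one_iff_of_nonneg (norm_nonneg x) two_ne_zero, sq_nonneg]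

theorem joinedIn_unitIsotropic_or_neg (hA : A.IsSymmetric)
    (hE : 3 ≤ Module.finrank ℝ E) {u v : E} (hu : u ∈ unitIsotropic A)
    (hv : v ∈ unitIsotropic A) :
    JoinedIn (unitIsotropic A) u v ∨ JoinedIn (unitIsotropic A) u (-v) := by
  let e := (hA.eigenvectorBasis rfl).repr
  have transfer {u v : E} (h : JoinedIn (diagUnitIsotropic (hA.eigenvalues rfl)) (e u) (e v)) :
      JoinedIn (unitIsotropic A) u v := by
    simpa using (h.map e.symm.continuous).mono <| by
      rintro _ ⟨w, hw, rfl⟩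
      rw [← hA.repr_mem_diagUnitIsotropic_iff rfl]
      simpa [e] using hw
  simp_rw [← hA.repr_mem_diagUnitIsotropic_iff rfl] at hu hv
  rcases joinedIn_diagUnitIsotropic_or_neg (by simpa using hE) hu hv with h | h
  · exact .inl (transfer h)
  · exact .inr (transfer (by simpa [e] using h))

theorem convex_image_sphere_of_isSymmetric {A₁ A₂ : E →ₗ[ℝ] E} (h₁ : A₁.IsSymmetric)
    (h₂ : A₂.IsSymmetric) (hE : 3 ≤ Module.finrank ℝ E) :
    Convex ℝ ((fun x => (⟪x, A₁ x⟫, ⟪x, A₂ x⟫)) '' Metric.sphere (0 : E) 1) := by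
  set F : E → ℝ × ℝ := fun x => (⟪x, A₁ x⟫, ⟪x, A₂ x⟫)
  refine convex_iff_segment_subset.mpr ?_
  rintro _ ⟨x, hx, rfl⟩ _ ⟨y, hy, rfl⟩
  rw [mem_sphere_zero_iff_norm] at hx hy
  rcases eq_or_ne (F x) (F y) with hxy | hxy
  · rw [hxy, segment_same, Set.singleton_subset_iff]
    exact mem_image_of_mem F (mem_sphere_zero_iff_norm.mpr hy)
  set a := F x
  set b := F y
  let A : E →ₗ[ℝ] E := (b.2 - a.2) • A₁ - (b.1 - a.1) • A₂ -
    ((b.2 - a.2) * a.1 - (b.1 - a.1) * a.2) • LinearMap.id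
  have hA : A.IsSymmetric :=
    ((h₁.smul (conj_trivial _)).sub (h₂.smul (conj_trivial _))).sub
      (LinearMap.IsSymmetric.id.smul (conj_trivial _))
  have hAz (z : E) (hz : ‖z‖ = 1) :
      ⟪z, A z⟫ = (b.2 - a.2) * ((F z).1 - a.1) - (b.1 - a.1) * ((F z).2 - a.2) := by
    simp [A, F, inner_sub_right, real_inner_smul_right, hz]
    ring
  have hx' : x ∈ unitIsotropic A := ⟨hx, by rw [hAz x hx]; ring⟩
  have hy' : y ∈ unitIsotropic A := ⟨hy, by rw [hAz y hy]; ring⟩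
  obtain ⟨y', hy'F, hjoin⟩ : ∃ y', F y' = b ∧ JoinedIn (unitIsotropic A) x y' := by
    rcases joinedIn_unitIsotropic_or_neg hA hE hx' hy' with h | h
    exacts [⟨y, rfl, h⟩, ⟨-y, by simp [F, b], h⟩]
  have hline : F '' unitIsotropic A ⊆ line[ℝ, F x, F y'] := by
    rintro _ ⟨z, hz, rfl⟩
    refine hy'F ▸ Prod.mem_affineSpan_pair_of_cross_eq hxy ?_
    linear_combination -((hAz z hz.1).symm.trans hz.2)
  calc segment ℝ a b = segment ℝ (F x) (F y') := by rw [hy'F]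
    _ ⊆ F '' unitIsotropic A := hjoin.segment_subset_image (by fun_prop) hline
    _ ⊆ F '' Metric.sphere 0 1 := image_mono fun z hz => mem_sphere_zero_iff_norm.mpr hz.1

end InnerProductSpace

/-- Brickman's theorem: for `n ≥ 3` and real symmetric `n×n` matrices `Q₁, Q₂`, the
image `{(xᵀQ₁x, xᵀQ₂x) : ‖x‖₂ = 1}` of the unit sphere under the pair of quadratic
forms is a convex subset of `ℝ²`. -/
theorem brickman (n : ℕ) (hn : 3 ≤ n)
    (Q₁ Q₂ : Matrix (Fin n) (Fin n) ℝ) (hQ₁ : Q₁ᵀ = Q₁) (hQ₂ : Q₂ᵀ = Q₂) :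
    Convex ℝ {p : ℝ × ℝ | ∃ x : EuclideanSpace ℝ (Fin n), ‖x‖ = 1 ∧
      p = (⟪x, Matrix.toEuclideanLin Q₁ x⟫, ⟪x, Matrix.toEuclideanLin Q₂ x⟫)} := by
  convert convex_image_sphere_of_isSymmetric (isSymmetric_toEuclideanLin_iff.mpr hQ₁)
    (isSymmetric_toEuclideanLin_iff.mpr hQ₂) (by rwa [finrank_euclideanSpace_fin]) using 1
  ext p
  simp [eq_comm]
end

section
/- (Sufficient global optimality condition for quadratic minimization over the sphere.) Let M be a real symmetric n×n matrix, u ∈ ℝⁿ, and suppose x* ∈ ℝⁿ satisfies ‖x*‖₂ = 1 and, for some ν ∈ ℝ, M x* + u = ν x* with M − νI positive semidefinite. Then x* is a global minimizer of x ↦ (1/2) xᵀMx + ⟨u,x⟩ over the unit sphere: for every x with ‖x‖₂ = 1, (1/2) xᵀMx + ⟨u,x⟩ ≥ (1/2) x*ᵀMx* + ⟨u,x*⟩. -/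
open scoped RealInnerProductSpace
open Matrix

/-!
With `u = ν x* - M x*`, the gap `f x - f x*` of the objective between two unit vectors equals
`½ ⟪x - x*, (M - νI)(x - x*)⟫`: expanding the quadratic exactly around `x*` leaves the linear
term `ν ⟪x*, x - x*⟫`, which on the unit sphere equals `-(ν/2) ‖x - x*‖²` and so shifts
`M` by `-νI` in the quadratic term.
-/

variable {E : Type*} [NormedAddCommGroup E] [InnerProductSpace ℝ E]

theorem LinearMap.IsSymmetric.quadratic_sub {T : E →ₗ[ℝ] E} (hT : T.IsSymmetric) (u x y : E) :
    (1 / 2) * ⟪x, T x⟫ + ⟪u, x⟫ - ((1 / 2) * ⟪y, T y⟫ + ⟪u, y⟫) =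
      (1 / 2) * ⟪x - y, T (x - y)⟫ + ⟪T y + u, x - y⟫ := by
  simp only [map_sub, inner_sub_left, inner_sub_right, inner_add_left, ← hT y x,
    real_inner_comm x (T y), real_inner_comm y (T y)]
  ring

theorem inner_sub_eq_neg_half_norm_sub_sq {x y : E} (hx : ‖x‖ = 1) (hy : ‖y‖ = 1) :
    ⟪y, x - y⟫ = -(1 / 2) * ‖x - y‖ ^ 2 := by
  rw [norm_sub_sq_real, inner_sub_right, real_inner_self_eq_norm_sq, hx, hy, real_inner_comm]
  ring

theorem isMinOn_quadratic_sphere_of_isPositive {T : E →ₗ[ℝ] E} {u y : E} {ν : ℝ}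
    (hpos : (T - ν • LinearMap.id).IsPositive) (hy : ‖y‖ = 1) (hstat : T y + u = ν • y) :
    IsMinOn (fun x ↦ (1 / 2) * ⟪x, T x⟫ + ⟪u, x⟫) (Metric.sphere 0 1) y := by
  have hT : T.IsSymmetric := by
    simpa using hpos.isSymmetric.add (LinearMap.IsSymmetric.id.smul (conj_trivial ν))
  refine isMinOn_iff.2 fun x hx ↦ ?_
  rw [mem_sphere_zero_iff_norm] at hx
  have hgap : (1 / 2) * ⟪x, T x⟫ + ⟪u, x⟫ - ((1 / 2) * ⟪y, T y⟫ + ⟪u, y⟫) =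
      (1 / 2) * ⟪x - y, (T - ν • LinearMap.id : E →ₗ[ℝ] E) (x - y)⟫ := by
    rw [hT.quadratic_sub, hstat, real_inner_smul_left, inner_sub_eq_neg_half_norm_sub_sq hx hy,
      LinearMap.sub_apply, inner_sub_right, LinearMap.smul_apply, LinearMap.id_apply,
      real_inner_smul_right, real_inner_self_eq_norm_sq]
    ring
  have hnonneg := hpos.re_inner_nonneg_right (x - y)
  simp only [RCLike.re_to_real] at hnonneg
  linarith

theorem sufficient_global_optimality_general (n : ℕ)
    (M : Matrix (Fin n) (Fin n) ℝ)
    (u xstar : EuclideanSpace ℝ (Fin n)) (hnorm : ‖xstar‖ = 1) (ν : ℝ)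
    (heig : Matrix.toEuclideanLin M xstar + u = ν • xstar)
    (hpsd : (M - ν • (1 : Matrix (Fin n) (Fin n) ℝ)).PosSemidef) :
    ∀ x : EuclideanSpace ℝ (Fin n), ‖x‖ = 1 →
      (1 / 2) * ⟪xstar, Matrix.toEuclideanLin M xstar⟫ + ⟪u, xstar⟫ ≤
        (1 / 2) * ⟪x, Matrix.toEuclideanLin M x⟫ + ⟪u, x⟫ := by
  have hpos : (Matrix.toEuclideanLin M - ν • LinearMap.id).IsPositive := by
    simpa using Matrix.isPositive_toEuclideanLin_iff.2 hpsd
  exact fun x hx ↦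
    isMinOn_quadratic_sphere_of_isPositive hpos hnorm heig (mem_sphere_zero_iff_norm.2 hx)

/-- Sufficient global optimality condition for minimizing
`x ↦ (1/2) xᵀMx + ⟨u,x⟩` over the unit sphere: if `‖x*‖ = 1`, `M x* + u = ν x*`
and `M - νI` is positive semidefinite, then `x*` is a global minimizer. -/
theorem sufficient_global_optimality (n : ℕ)
    (M : Matrix (Fin n) (Fin n) ℝ) (hM : Mᵀ = M)
    (u xstar : EuclideanSpace ℝ (Fin n)) (hnorm : ‖xstar‖ = 1) (ν : ℝ)
    (heig : Matrix.toEuclideanLin M xstar + u = ν • xstar)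
    (hpsd : (M - ν • (1 : Matrix (Fin n) (Fin n) ℝ)).PosSemidef) :
    ∀ x : EuclideanSpace ℝ (Fin n), ‖x‖ = 1 →
      (1 / 2) * ⟪xstar, Matrix.toEuclideanLin M xstar⟫ + ⟪u, xstar⟫ ≤
        (1 / 2) * ⟪x, Matrix.toEuclideanLin M x⟫ + ⟪u, x⟫ :=
  sufficient_global_optimality_general n M u xstar hnorm ν heig hpsd
end

section
/- (Necessary global optimality condition for quadratic minimization over the sphere.) Let M be a real symmetric n×n matrix and u ∈ ℝⁿ. If x* with ‖x*‖₂ = 1 is a global minimizer of x ↦ (1/2) xᵀMx + ⟨u,x⟩ over the unit sphere, then there exists ν ∈ ℝ such that M x* + u = ν x* and M − νI is positive semidefinite. -/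
/-!
Write `f` for the objective, `ν = ⟪A x + u, x⟫` and `w = A x + u - ν • x`, so `w ⟂ x`. On the
unit sphere, `f (x + d) - f x = ⟪w, d⟫ + ½ (⟪d, A d⟫ - ν ‖d‖²)`, because the constraint forces
`2 ⟪x, d⟫ = -‖d‖²`. Every line `x + ℝ z` with `⟪x, z⟫ ≠ 0` meets the sphere a second time, which
turns minimality into one scalar inequality per direction `z`. Directions `z = w + s • x` with `s → 0⁺`
force `w = 0`, after which the same inequality gives `⟪z, (A - ν) z⟫ ≥ 0` off the hyperplane `x⟂`,
and on `x⟂` by continuity.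
-/

open scoped RealInnerProductSpace
open Matrix Filter Topology

section SphereQuadratic

variable {E : Type*} [NormedAddCommGroup E] [InnerProductSpace ℝ E]

noncomputable def sphereObjective (A : E →ₗ[ℝ] E) (u x : E) : ℝ := (1 / 2) * ⟪x, A x⟫ + ⟪u, x⟫

lemma nonneg_of_forall_pos_nonneg {p : ℝ → ℝ} (hp : ContinuousAt p 0) (h : ∀ s > 0, 0 ≤ p s) :
    0 ≤ p 0 :=
  ge_of_tendsto (hp.tendsto.mono_left (nhdsWithin_le_nhds (s := Set.Ioi 0)))
    (eventually_nhdsWithin_of_forall h)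

lemma continuous_inner_map_add_smul (A : E →ₗ[ℝ] E) (x z : E) :
    Continuous fun s : ℝ => ⟪z + s • x, A (z + s • x)⟫ := by
  simp only [map_add, map_smul]
  fun_prop

lemma norm_add_smul_eq_one {x z : E} (hx : ‖x‖ = 1) (hz : z ≠ 0) :
    ‖x + (-2 * ⟪x, z⟫ / ‖z‖ ^ 2) • z‖ = 1 := by
  have hz' : ‖z‖ ≠ 0 := norm_ne_zero_iff.mpr hz
  rw [← pow_eq_one_iff_of_nonneg (norm_nonneg _) two_ne_zero, norm_add_sq_real, norm_smul,
    mul_pow, Real.norm_eq_abs, sq_abs, inner_smul_right, hx]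
  field_simp
  ring

lemma sphereObjective_sub {A : E →ₗ[ℝ] E} (hA : A.IsSymmetric) (u : E) (ν : ℝ) {x y : E}
    (hx : ‖x‖ = 1) (hy : ‖y‖ = 1) :
    sphereObjective A u y - sphereObjective A u x =
      ⟪A x + u - ν • x, y - x⟫ + (1 / 2) * (⟪y - x, A (y - x)⟫ - ν * ‖y - x‖ ^ 2) := by
  simp only [sphereObjective, map_sub, inner_sub_left, inner_sub_right, inner_add_left,
    real_inner_smul_left, norm_sub_sq_real, hx, hy, real_inner_self_eq_norm_sq]
  linear_combination (-1/2 : ℝ) * hA x y - (1/2 : ℝ) * real_inner_comm y (A x)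
    - ν * real_inner_comm x y + real_inner_comm x (A x)

lemma chord_inequality_of_isMinOn {A : E →ₗ[ℝ] E} (hA : A.IsSymmetric) {u x : E} (hx : ‖x‖ = 1)
    (hmin : IsMinOn (sphereObjective A u) (Metric.sphere 0 1) x) (ν : ℝ) (z : E) :
    ⟪x, z⟫ * ‖z‖ ^ 2 * ⟪A x + u - ν • x, z⟫ ≤ ⟪x, z⟫ ^ 2 * (⟪z, A z⟫ - ν * ‖z‖ ^ 2) := by
  rcases eq_or_ne z 0 with rfl | hz
  · simp
  have hz' : ‖z‖ ≠ 0 := norm_ne_zero_iff.mpr hz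
  set t := -2 * ⟪x, z⟫ / ‖z‖ ^ 2
  have hy := norm_add_smul_eq_one hx hz
  have hdiff := sphereObjective_sub hA u ν hx hy
  rw [add_sub_cancel_left, map_smul, real_inner_smul_left, real_inner_smul_right,
    real_inner_smul_right, norm_smul, mul_pow, Real.norm_eq_abs, sq_abs] at hdiff
  set g := t * ⟪A x + u - ν • x, z⟫ + 1 / 2 * (t * (t * ⟪z, A z⟫) - ν * (t ^ 2 * ‖z‖ ^ 2))
  have hgain : 0 ≤ g := by
    linarith [isMinOn_iff.mp hmin _ (mem_sphere_zero_iff_norm.mpr hy)]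
  have hscale : g * (‖z‖ ^ 4 / 2) =
      ⟪x, z⟫ ^ 2 * (⟪z, A z⟫ - ν * ‖z‖ ^ 2) - ⟪x, z⟫ * ‖z‖ ^ 2 * ⟪A x + u - ν • x, z⟫ := by
    simp only [g, t]
    field_simp
    ring
  linarith [mul_nonneg hgain (by positivity : (0 : ℝ) ≤ ‖z‖ ^ 4 / 2)]

lemma map_add_eq_smul_of_isMinOn {A : E →ₗ[ℝ] E} (hA : A.IsSymmetric) {u x : E} (hx : ‖x‖ = 1)
    (hmin : IsMinOn (sphereObjective A u) (Metric.sphere 0 1) x) :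
    A x + u = ⟪A x + u, x⟫ • x := by
  set ν := ⟪A x + u, x⟫
  set w := A x + u - ν • x with hw
  have hxw : ⟪x, w⟫ = 0 := by
    rw [inner_sub_right, real_inner_smul_right, real_inner_self_eq_norm_sq, hx, real_inner_comm]
    ring
  have hslope : ∀ s > 0, 0 ≤ s * (⟪w + s • x, A (w + s • x)⟫ - ν * ‖w + s • x‖ ^ 2)
      - (‖w‖ ^ 2 + s ^ 2) * ‖w‖ ^ 2 := by
    intro s hs
    have h := chord_inequality_of_isMinOn hA hx hmin ν (w + s • x)
    have hnorm : ‖w + s • x‖ ^ 2 = ‖w‖ ^ 2 + s ^ 2 := by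
      rw [norm_add_sq_real, real_inner_smul_right, real_inner_comm, hxw, norm_smul, hx,
        Real.norm_eq_abs, mul_one, sq_abs]
      ring
    rw [← hw, inner_add_right, inner_add_right, real_inner_smul_right, real_inner_smul_right,
      real_inner_self_eq_norm_sq, real_inner_self_eq_norm_sq, hx, real_inner_comm x w, hxw,
      hnorm] at h
    rw [hnorm]
    refine le_of_mul_le_mul_left ?_ hs
    linarith
  have hcont := continuous_inner_map_add_smul A x w
  have h0 := nonneg_of_forall_pos_nonneg (by fun_prop) hslope
  simp only [zero_smul, add_zero, zero_mul, zero_sub, zero_pow two_ne_zero] at h0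
  have hw0 : w = 0 := by simpa using le_antisymm (neg_nonneg.mp h0) (by positivity)
  exact sub_eq_zero.mp hw0

lemma isPositive_sub_smul_of_isMinOn {A : E →ₗ[ℝ] E} (hA : A.IsSymmetric) {u x : E}
    (hx : ‖x‖ = 1) (hmin : IsMinOn (sphereObjective A u) (Metric.sphere 0 1) x) {ν : ℝ}
    (hν : A x + u = ν • x) : (A - ν • 1).IsPositive := by
  have hoff : ∀ z, ⟪x, z⟫ ≠ 0 → 0 ≤ ⟪z, A z⟫ - ν * ‖z‖ ^ 2 := by
    intro z hz
    have h := chord_inequality_of_isMinOn hA hx hmin ν z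
    rw [sub_eq_zero.mpr hν, inner_zero_left, mul_zero] at h
    exact nonneg_of_mul_nonneg_right h (by positivity)
  have hall : ∀ z, 0 ≤ ⟪z, A z⟫ - ν * ‖z‖ ^ 2 := by
    intro z
    by_cases hz : ⟪x, z⟫ = 0
    · have hcont := continuous_inner_map_add_smul A x z
      have h0 := nonneg_of_forall_pos_nonneg
        (p := fun s => ⟪z + s • x, A (z + s • x)⟫ - ν * ‖z + s • x‖ ^ 2)
        (by fun_prop) (fun s hs => hoff _ ?_)
      · simpa using h0
      rw [inner_add_right, hz, real_inner_smul_right, real_inner_self_eq_norm_sq, hx]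
      simpa using hs.ne'
    · exact hoff z hz
  refine (LinearMap.isPositive_iff _).mpr
    ⟨hA.sub (LinearMap.IsSymmetric.id.smul rfl), fun z => ?_⟩
  simpa [inner_sub_left, real_inner_smul_left, real_inner_smul_right, real_inner_comm,
    real_inner_self_eq_norm_sq] using hall z

theorem exists_multiplier_of_isMinOn_sphere {A : E →ₗ[ℝ] E} (hA : A.IsSymmetric) {u x : E}
    (hx : ‖x‖ = 1) (hmin : IsMinOn (sphereObjective A u) (Metric.sphere 0 1) x) :
    ∃ ν : ℝ, A x + u = ν • x ∧ (A - ν • 1).IsPositive :=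
  ⟨_, map_add_eq_smul_of_isMinOn hA hx hmin,
    isPositive_sub_smul_of_isMinOn hA hx hmin (map_add_eq_smul_of_isMinOn hA hx hmin)⟩

end SphereQuadratic

/-- Necessary global optimality condition for minimizing
`x ↦ (1/2) xᵀMx + ⟨u,x⟩` over the unit sphere: if `x*` with `‖x*‖ = 1` is a global
minimizer, then there is `ν ∈ ℝ` with `M x* + u = ν x*` and `M - νI` positive
semidefinite. -/
theorem necessary_global_optimality (n : ℕ)
    (M : Matrix (Fin n) (Fin n) ℝ) (hM : Mᵀ = M)
    (u xstar : EuclideanSpace ℝ (Fin n)) (hnorm : ‖xstar‖ = 1)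
    (hmin : ∀ x : EuclideanSpace ℝ (Fin n), ‖x‖ = 1 →
      (1 / 2) * ⟪xstar, Matrix.toEuclideanLin M xstar⟫ + ⟪u, xstar⟫ ≤
        (1 / 2) * ⟪x, Matrix.toEuclideanLin M x⟫ + ⟪u, x⟫) :
    ∃ ν : ℝ, Matrix.toEuclideanLin M xstar + u = ν • xstar ∧
      (M - ν • (1 : Matrix (Fin n) (Fin n) ℝ)).PosSemidef := by
  have hA : (Matrix.toEuclideanLin M).IsSymmetric :=
    isSymmetric_toEuclideanLin_iff.mpr ((conjTranspose_eq_transpose_of_trivial M).trans hM)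
  obtain ⟨ν, hν, hpos⟩ := exists_multiplier_of_isMinOn_sphere hA hnorm
    fun x hx => hmin x (mem_sphere_zero_iff_norm.mp hx)
  refine ⟨ν, hν, ?_⟩
  have hone : toEuclideanLin (1 : Matrix (Fin n) (Fin n) ℝ) = 1 := by ext; simp
  rwa [← isPositive_toEuclideanLin_iff, map_sub, map_smul, hone]
end

section
/- (Explicit solution in the nondegenerate case.) Let M be a real symmetric n×n matrix with eigenvalues λ₁ ≤ … ≤ λₙ and an associated orthonormal basis of eigenvectors φ₁,…,φₙ, let u ∈ ℝⁿ and set γᵢ = φᵢᵀu. Suppose ν ∈ ℝ satisfies ν < λ₁ and the secular equation Σ_{i=1}^{n} γᵢ²/(λᵢ − ν)² = 1. Then the vector x* = Σ_{i=1}^{n} (−γᵢ/(λᵢ − ν)) φᵢ has ‖x*‖₂ = 1 and is a global minimizer of x ↦ (1/2) xᵀMx + ⟨u,x⟩ over the unit sphere in ℝⁿ. -/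
open scoped RealInnerProductSpace
open Matrix

/-- Explicit solution in the nondegenerate case: if `M` is symmetric with
eigenvalues `λ₁ ≤ … ≤ λₙ` and orthonormal eigenvectors `φ₁,…,φₙ`, `γᵢ = φᵢᵀu`,
and `ν < λ₁` solves the secular equation `Σ γᵢ²/(λᵢ - ν)² = 1`, then
`x* = Σ (-γᵢ/(λᵢ - ν)) φᵢ` is a unit vector which globally minimizes
`x ↦ (1/2) xᵀMx + ⟨u,x⟩` over the unit sphere. -/
theorem nondegenerate_case_solution (n : ℕ) (hn : 0 < n)
    (M : Matrix (Fin n) (Fin n) ℝ) (hM : Mᵀ = M)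
    (lam : Fin n → ℝ) (hmono : Monotone lam)
    (φ : Fin n → EuclideanSpace ℝ (Fin n)) (hON : Orthonormal ℝ φ)
    (heig : ∀ i, Matrix.toEuclideanLin M (φ i) = lam i • φ i)
    (u : EuclideanSpace ℝ (Fin n)) (ν : ℝ)
    (hν : ν < lam ⟨0, hn⟩)
    (hsec : ∑ i, (⟪φ i, u⟫) ^ 2 / (lam i - ν) ^ 2 = 1) :
    ‖∑ i, (-(⟪φ i, u⟫) / (lam i - ν)) • φ i‖ = 1 ∧
    ∀ x : EuclideanSpace ℝ (Fin n), ‖x‖ = 1 →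
      (1 / 2) * ⟪∑ i, (-(⟪φ i, u⟫) / (lam i - ν)) • φ i,
          Matrix.toEuclideanLin M (∑ i, (-(⟪φ i, u⟫) / (lam i - ν)) • φ i)⟫ +
        ⟪u, ∑ i, (-(⟪φ i, u⟫) / (lam i - ν)) • φ i⟫ ≤
      (1 / 2) * ⟪x, Matrix.toEuclideanLin M x⟫ + ⟪u, x⟫ := by
  set γ : Fin n → ℝ := fun i => ⟪φ i, u⟫ with hγ
  set d : Fin n → ℝ := fun i => -γ i / (lam i - ν) with hd
  have hpos : ∀ i, 0 < lam i - ν := by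
    intro i
    have h0i : (⟨0, hn⟩ : Fin n) ≤ i := by
      simp [Fin.le_def]
    linarith [hmono h0i]
  -- bilinear expansion
  have key2 : ∀ c e : Fin n → ℝ,
      ⟪∑ i, c i • φ i, ∑ i, e i • φ i⟫ = ∑ i, c i * e i := by
    intro c e
    rw [sum_inner]
    have : ∀ i, ⟪c i • φ i, ∑ j, e j • φ j⟫ = c i * e i := by
      intro i
      rw [inner_sum]
      have : ∀ j, ⟪c i • φ i, e j • φ j⟫ = c i * e j * (if i = j then 1 else 0) := by
        intro j
        rw [real_inner_smul_left, real_inner_smul_right, orthonormal_iff_ite.mp hON]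
        ring
      simp_rw [this]
      simp [Finset.sum_ite_eq]
    simp_rw [this]
  -- action of M on a combination
  have hMc : ∀ c : Fin n → ℝ,
      Matrix.toEuclideanLin M (∑ i, c i • φ i) = ∑ i, (c i * lam i) • φ i := by
    intro c
    rw [map_sum]
    congr 1
    funext i
    rw [LinearMap.map_smul, heig i, smul_smul]
  -- objective in coordinates
  have hobj : ∀ c : Fin n → ℝ,
      (1 / 2) * ⟪∑ i, c i • φ i, Matrix.toEuclideanLin M (∑ i, c i • φ i)⟫ +
        ⟪u, ∑ i, c i • φ i⟫ =
      ∑ i, ((1 / 2) * lam i * c i ^ 2 + γ i * c i) := by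
    intro c
    rw [hMc c, key2]
    rw [inner_sum]
    simp_rw [real_inner_smul_right]
    rw [Finset.mul_sum, ← Finset.sum_add_distrib]
    refine Finset.sum_congr rfl fun i _ => ?_
    rw [real_inner_comm (φ i) u]
    simp only [hγ]
    ring
  have hd2 : ∀ i, d i ^ 2 = γ i ^ 2 / (lam i - ν) ^ 2 := by
    intro i
    simp only [hd]
    rw [div_pow]
    ring_nf
  have hnormd : ∑ i, d i ^ 2 = 1 := by
    simp_rw [hd2]; exact hsec
  have hnorm1 : ‖∑ i, d i • φ i‖ = 1 := by
    have h := key2 d d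
    have : ‖∑ i, d i • φ i‖ ^ 2 = 1 := by
      rw [← real_inner_self_eq_norm_sq, h]
      simp_rw [← sq]
      exact hnormd
    nlinarith [norm_nonneg (∑ i, d i • φ i)]
  constructor
  · exact hnorm1
  · intro x hx
    -- represent x in the orthonormal basis
    have hcard : Fintype.card (Fin n) = Module.finrank ℝ (EuclideanSpace ℝ (Fin n)) := by
      simp
    haveI : Nonempty (Fin n) := ⟨⟨0, hn⟩⟩
    have hspan : ⊤ ≤ Submodule.span ℝ (Set.range φ) :=
      (hON.linearIndependent.span_eq_top_of_card_eq_finrank hcard).ge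
    let b : OrthonormalBasis (Fin n) ℝ (EuclideanSpace ℝ (Fin n)) :=
      OrthonormalBasis.mk hON hspan
    have hb : ∀ i, b i = φ i := fun i => congrFun (OrthonormalBasis.coe_mk hON hspan) i
    set c : Fin n → ℝ := fun i => ⟪φ i, x⟫ with hc
    have hxrep : ∑ i, c i • φ i = x := by
      have := b.sum_repr' x
      simp_rw [hb] at this
      exact this
    have hnormc : ∑ i, c i ^ 2 = 1 := by
      have h := key2 c c
      rw [hxrep] at h
      rw [real_inner_self_eq_norm_sq, hx] at h
      simp_rw [← sq] at h
      rw [← h]; ring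
    rw [hobj d, ← hxrep, hobj c]
    -- termwise inequality after shifting by ν/2
    have hterm : ∀ i ∈ Finset.univ,
        (1 / 2) * lam i * d i ^ 2 + γ i * d i - (ν / 2) * d i ^ 2 ≤
        (1 / 2) * lam i * c i ^ 2 + γ i * c i - (ν / 2) * c i ^ 2 := by
      intro i _
      have hp := hpos i
      have hdi : d i * (lam i - ν) = -γ i := by
        simp only [hd]
        field_simp
      nlinarith [sq_nonneg (c i * (lam i - ν) + γ i), sq_nonneg (c i - d i)]
    have hsum := Finset.sum_le_sum hterm
    rw [Finset.sum_sub_distrib, Finset.sum_sub_distrib] at hsum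
    have e1 : ∑ i, (ν / 2) * d i ^ 2 = ν / 2 := by
      rw [← Finset.mul_sum, hnormd, mul_one]
    have e2 : ∑ i, (ν / 2) * c i ^ 2 = ν / 2 := by
      rw [← Finset.mul_sum, hnormc, mul_one]
    rw [e1, e2] at hsum
    linarith
end

section
/- (Minimizers in the degenerate case.) Let M be a real symmetric n×n matrix with eigenvalues λ₁ ≤ … ≤ λₙ and an associated orthonormal basis of eigenvectors φ₁,…,φₙ, let u ∈ ℝⁿ and set γᵢ = φᵢᵀu. Let E₁ = { i : λᵢ = λ₁ } and E₊ = { i : λᵢ > λ₁ }. Suppose γᵢ = 0 for all i ∈ E₁ and Σ_{i ∈ E₊} γᵢ²/(λᵢ − λ₁)² ≤ 1. Then every vector of the form x = Σ_{i ∈ E₊} (−γᵢ/(λᵢ − λ₁)) φᵢ + w, where w lies in the eigenspace of M for λ₁ and the coefficients satisfy ‖w‖₂² = 1 − Σ_{i ∈ E₊} γᵢ²/(λᵢ − λ₁)² (so that ‖x‖₂ = 1), is a global minimizer of x ↦ (1/2) xᵀMx + ⟨u,x⟩ over the unit sphere in ℝⁿ. -/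
/-!
Shift `M` by its smallest eigenvalue: `T = M - λ₁` is positive semidefinite, and on the unit
sphere the objective differs from `x ↦ ½⟪x, T x⟫ + ⟪u, x⟫` by the constant `λ₁ / 2`. The given
`x` solves `T x = -u` (the vanishing of `γᵢ` on `E₁` is what makes `-u` lie in the range of `T`),
so `½⟪y, T y⟫ + ⟪u, y⟫ - (½⟪x, T x⟫ + ⟪u, x⟫) = ½⟪y - x, T (y - x)⟫ ≥ 0`; and `w ⊥ φᵢ` for
`i ∈ E₊` gives `‖x‖ = 1` by Pythagoras.
-/

open scoped RealInnerProductSpace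
open Matrix

variable {E : Type*} [NormedAddCommGroup E] [InnerProductSpace ℝ E]

theorem Orthonormal.norm_sum_smul_add_sq {ι : Type*} {b : ι → E} (hb : Orthonormal ℝ b)
    (s : Finset ι) (c : ι → ℝ) {w : E} (hw : ∀ i ∈ s, ⟪b i, w⟫ = 0) :
    ‖∑ i ∈ s, c i • b i + w‖ ^ 2 = ∑ i ∈ s, c i ^ 2 + ‖w‖ ^ 2 := by
  have horth : ⟪∑ i ∈ s, c i • b i, w⟫ = 0 := by
    simp only [sum_inner, real_inner_smul_left]
    exact Finset.sum_eq_zero fun i hi => by rw [hw i hi, mul_zero]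
  rw [norm_add_sq_real, horth, ← real_inner_self_eq_norm_sq, hb.inner_sum]
  simp only [conj_trivial, sq, mul_zero, add_zero]

namespace LinearMap

theorem IsPositive.half_inner_add_inner_le {T : E →ₗ[ℝ] E} (hT : T.IsPositive) {u x : E}
    (hx : T x = -u) (y : E) :
    1 / 2 * ⟪x, T x⟫ + ⟪u, x⟫ ≤ 1 / 2 * ⟪y, T y⟫ + ⟪u, y⟫ := by
  have hxy : 0 ≤ ⟪y - x, T (y - x)⟫ := hT.inner_nonneg_right _
  have hsymm : ⟪x, T y⟫ = ⟪T x, y⟫ := (hT.isSymmetric x y).symm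
  simp only [map_sub, inner_sub_left, inner_sub_right, hsymm, hx, inner_neg_left,
    inner_neg_right, real_inner_comm u] at hxy ⊢
  linarith

theorem IsPositive.half_inner_add_inner_le_of_norm_eq {A : E →ₗ[ℝ] E} {c : ℝ}
    (hA : (A - c • LinearMap.id).IsPositive) {u x y : E}
    (hx : (A - c • LinearMap.id : E →ₗ[ℝ] E) x = -u)
    (hxy : ‖x‖ = ‖y‖) :
    1 / 2 * ⟪x, A x⟫ + ⟪u, x⟫ ≤ 1 / 2 * ⟪y, A y⟫ + ⟪u, y⟫ := by
  have hshift (z : E) : ⟪z, A z⟫ = ⟪z, (A - c • LinearMap.id : E →ₗ[ℝ] E) z⟫ + c * ‖z‖ ^ 2 := by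
    simp [inner_sub_right, real_inner_smul_right]
  have := hA.half_inner_add_inner_le hx y
  rw [hshift x, hshift y, hxy]
  linarith

section EigenBasis

variable {ι : Type*} [Fintype ι] {T : E →ₗ[ℝ] E} {b : OrthonormalBasis ι ℝ E} {μ : ι → ℝ}

theorem IsSymmetric.inner_apply_self_eq_sum (hT : T.IsSymmetric)
    (hb : ∀ i, T (b i) = μ i • b i) (y : E) :
    ⟪y, T y⟫ = ∑ i, μ i * ⟪b i, y⟫ ^ 2 := by
  rw [← b.sum_inner_mul_inner]
  refine Finset.sum_congr rfl fun i _ => ?_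
  rw [← hT, hb, real_inner_smul_left, real_inner_comm y]
  ring

theorem IsSymmetric.isPositive_of_eigenvalues_nonneg (hT : T.IsSymmetric)
    (hb : ∀ i, T (b i) = μ i • b i) (hμ : ∀ i, 0 ≤ μ i) : T.IsPositive :=
  ⟨hT, fun y => by
    rw [RCLike.re_to_real, real_inner_comm, hT.inner_apply_self_eq_sum hb]
    exact Finset.sum_nonneg fun i _ => mul_nonneg (hμ i) (sq_nonneg _)⟩

theorem IsSymmetric.inner_eq_zero_of_eigenvalues_ne (hT : T.IsSymmetric) {v w : E} {μ ν : ℝ}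
    (hv : T v = μ • v) (hw : T w = ν • w) (hμν : μ ≠ ν) : ⟪v, w⟫ = 0 := by
  have h : μ * ⟪v, w⟫ = ν * ⟪v, w⟫ := by
    rw [← real_inner_smul_left, ← real_inner_smul_right, ← hv, ← hw, hT]
  exact (mul_eq_mul_right_iff.1 h).resolve_left hμν

theorem apply_sum_neg_inner_div_smul (hb : ∀ i, T (b i) = μ i • b i) {s : Finset ι}
    (hμ : ∀ i ∈ s, μ i ≠ 0) {u : E} (hu : ∀ i ∉ s, ⟪b i, u⟫ = 0) :
    T (∑ i ∈ s, (-⟪b i, u⟫ / μ i) • b i) = -u := by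
  have hus : ∑ i ∈ s, ⟪b i, u⟫ • b i = u := by
    rw [Finset.sum_subset (Finset.subset_univ s) fun i _ hi => by rw [hu i hi, zero_smul]]
    exact b.sum_repr' u
  calc T (∑ i ∈ s, (-⟪b i, u⟫ / μ i) • b i) = ∑ i ∈ s, -(⟪b i, u⟫ • b i) := by
        rw [map_sum]
        refine Finset.sum_congr rfl fun i hi => ?_
        rw [map_smul, hb, smul_smul, div_mul_cancel₀ _ (hμ i hi), neg_smul]
    _ = -u := by rw [Finset.sum_neg_distrib, hus]

end EigenBasis

end LinearMap

theorem degenerate_case_minimizers_general (n : ℕ) (hn : 0 < n)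
    (M : Matrix (Fin n) (Fin n) ℝ) (hM : Mᵀ = M)
    (lam : Fin n → ℝ) (hmono : Monotone lam)
    (φ : Fin n → EuclideanSpace ℝ (Fin n)) (hON : Orthonormal ℝ φ)
    (heig : ∀ i, Matrix.toEuclideanLin M (φ i) = lam i • φ i)
    (u : EuclideanSpace ℝ (Fin n))
    (hγ : ∀ i, lam i = lam ⟨0, hn⟩ → ⟪φ i, u⟫ = 0)
    (w : EuclideanSpace ℝ (Fin n))
    (hw : Matrix.toEuclideanLin M w = lam ⟨0, hn⟩ • w)
    (hwnorm : ‖w‖ ^ 2 = 1 - ∑ i ∈ Finset.univ.filter (fun i => lam ⟨0, hn⟩ < lam i),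
        (⟪φ i, u⟫) ^ 2 / (lam i - lam ⟨0, hn⟩) ^ 2) :
    ‖(∑ i ∈ Finset.univ.filter (fun i => lam ⟨0, hn⟩ < lam i),
        (-(⟪φ i, u⟫) / (lam i - lam ⟨0, hn⟩)) • φ i) + w‖ = 1 ∧
    ∀ y : EuclideanSpace ℝ (Fin n), ‖y‖ = 1 →
      (1 / 2) * ⟪(∑ i ∈ Finset.univ.filter (fun i => lam ⟨0, hn⟩ < lam i),
            (-(⟪φ i, u⟫) / (lam i - lam ⟨0, hn⟩)) • φ i) + w,
          Matrix.toEuclideanLin M ((∑ i ∈ Finset.univ.filter (fun i => lam ⟨0, hn⟩ < lam i),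
            (-(⟪φ i, u⟫) / (lam i - lam ⟨0, hn⟩)) • φ i) + w)⟫ +
        ⟪u, (∑ i ∈ Finset.univ.filter (fun i => lam ⟨0, hn⟩ < lam i),
            (-(⟪φ i, u⟫) / (lam i - lam ⟨0, hn⟩)) • φ i) + w⟫ ≤
      (1 / 2) * ⟪y, Matrix.toEuclideanLin M y⟫ + ⟪u, y⟫ := by
  obtain ⟨b, rfl⟩ : ∃ b : OrthonormalBasis (Fin n) ℝ (EuclideanSpace ℝ (Fin n)), ⇑b = φ :=
    ⟨.mk hON (hON.linearIndependent.span_eq_top_of_card_eq_finrank' (by simp)).ge, by simp⟩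
  set lam₁ := lam ⟨0, hn⟩
  set s := Finset.univ.filter (fun i => lam₁ < lam i)
  set A := Matrix.toEuclideanLin M
  set T : Module.End ℝ (EuclideanSpace ℝ (Fin n)) := A - lam₁ • LinearMap.id
  have hlam₁ (i : Fin n) : lam₁ ≤ lam i := hmono (Nat.zero_le _)
  have hTb (i : Fin n) : T (b i) = (lam i - lam₁) • b i := by simp [T, heig, sub_smul]
  have hTw : T w = 0 := by simp [T, hw]
  have hT : T.IsSymmetric :=
    (isSymmetric_toEuclideanLin_iff.2 (isHermitian_iff_isSymm.2 hM)).sub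
      (LinearMap.IsSymmetric.id.smul rfl)
  have hx : T (∑ i ∈ s, (-⟪b i, u⟫ / (lam i - lam₁)) • b i + w) = -u := by
    rw [map_add, hTw, add_zero]
    refine LinearMap.apply_sum_neg_inner_div_smul hTb (fun i hi => ?_) fun i hi => ?_
    · exact sub_ne_zero.2 (Finset.mem_filter.1 hi).2.ne'
    · exact hγ i (le_antisymm (not_lt.1 fun h => hi (by simp [s, h])) (hlam₁ i))
  have hnorm : ‖∑ i ∈ s, (-⟪b i, u⟫ / (lam i - lam₁)) • b i + w‖ = 1 := by
    refine (pow_eq_one_iff_of_nonneg (norm_nonneg _) two_ne_zero).1 ?_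
    rw [b.orthonormal.norm_sum_smul_add_sq, hwnorm]
    · simp only [neg_div, neg_sq, div_pow, add_sub_cancel]
    · intro i hi
      exact hT.inner_eq_zero_of_eigenvalues_ne (hTb i) (by rw [hTw, zero_smul])
        (sub_ne_zero.2 (Finset.mem_filter.1 hi).2.ne')
  have hTpos : T.IsPositive :=
    hT.isPositive_of_eigenvalues_nonneg hTb fun i => sub_nonneg.2 (hlam₁ i)
  exact ⟨hnorm, fun y hy => hTpos.half_inner_add_inner_le_of_norm_eq hx (hnorm.trans hy.symm)⟩

/-- Minimizers in the degenerate case: if `M` is symmetric with eigenvalues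
`λ₁ ≤ … ≤ λₙ` and orthonormal eigenvectors `φ₁,…,φₙ`, `γᵢ = φᵢᵀu`, `γᵢ = 0` for all
`i` with `λᵢ = λ₁`, and `Σ_{λᵢ > λ₁} γᵢ²/(λᵢ - λ₁)² ≤ 1`, then every vector
`x = Σ_{λᵢ > λ₁} (-γᵢ/(λᵢ - λ₁)) φᵢ + w` with `w` in the `λ₁`-eigenspace and
`‖w‖² = 1 - Σ_{λᵢ > λ₁} γᵢ²/(λᵢ - λ₁)²` is a unit-norm global minimizer of
`x ↦ (1/2) xᵀMx + ⟨u,x⟩` over the unit sphere. -/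
theorem degenerate_case_minimizers (n : ℕ) (hn : 0 < n)
    (M : Matrix (Fin n) (Fin n) ℝ) (hM : Mᵀ = M)
    (lam : Fin n → ℝ) (hmono : Monotone lam)
    (φ : Fin n → EuclideanSpace ℝ (Fin n)) (hON : Orthonormal ℝ φ)
    (heig : ∀ i, Matrix.toEuclideanLin M (φ i) = lam i • φ i)
    (u : EuclideanSpace ℝ (Fin n))
    (hγ : ∀ i, lam i = lam ⟨0, hn⟩ → ⟪φ i, u⟫ = 0)
    (hsum : ∑ i ∈ Finset.univ.filter (fun i => lam ⟨0, hn⟩ < lam i),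
        (⟪φ i, u⟫) ^ 2 / (lam i - lam ⟨0, hn⟩) ^ 2 ≤ 1)
    (w : EuclideanSpace ℝ (Fin n))
    (hw : Matrix.toEuclideanLin M w = lam ⟨0, hn⟩ • w)
    (hwnorm : ‖w‖ ^ 2 = 1 - ∑ i ∈ Finset.univ.filter (fun i => lam ⟨0, hn⟩ < lam i),
        (⟪φ i, u⟫) ^ 2 / (lam i - lam ⟨0, hn⟩) ^ 2) :
    ‖(∑ i ∈ Finset.univ.filter (fun i => lam ⟨0, hn⟩ < lam i),
        (-(⟪φ i, u⟫) / (lam i - lam ⟨0, hn⟩)) • φ i) + w‖ = 1 ∧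
    ∀ y : EuclideanSpace ℝ (Fin n), ‖y‖ = 1 →
      (1 / 2) * ⟪(∑ i ∈ Finset.univ.filter (fun i => lam ⟨0, hn⟩ < lam i),
            (-(⟪φ i, u⟫) / (lam i - lam ⟨0, hn⟩)) • φ i) + w,
          Matrix.toEuclideanLin M ((∑ i ∈ Finset.univ.filter (fun i => lam ⟨0, hn⟩ < lam i),
            (-(⟪φ i, u⟫) / (lam i - lam ⟨0, hn⟩)) • φ i) + w)⟫ +
        ⟪u, (∑ i ∈ Finset.univ.filter (fun i => lam ⟨0, hn⟩ < lam i),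
            (-(⟪φ i, u⟫) / (lam i - lam ⟨0, hn⟩)) • φ i) + w⟫ ≤
      (1 / 2) * ⟪y, Matrix.toEuclideanLin M y⟫ + ⟪u, y⟫ :=
  degenerate_case_minimizers_general n hn M hM lam hmono φ hON heig u hγ w hw hwnorm
end

section
/- (Tangent cone to the positive semidefinite cone.) Let 𝒮ⁿ denote the space of real symmetric n×n matrices and 𝒮ⁿ₊ ⊆ 𝒮ⁿ the cone of positive semidefinite matrices. For every W ∈ 𝒮ⁿ₊, the tangent cone to 𝒮ⁿ₊ at W (within 𝒮ⁿ) is { H ∈ 𝒮ⁿ : uᵀHu ≥ 0 for every u in the kernel of W }. -/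
/-!
Every `t • (S - W)` is symmetric and nonnegative on `ker W`, and these conditions are closed,
which gives one inclusion. Conversely, if `H` is symmetric and nonnegative on `ker W`, then
`H + ε • 1` is positive on the nonzero vectors of `ker W`. Since `uᵀWu ≥ 0` vanishes on the unit
sphere only at kernel vectors, compactness of the sphere makes `W + δ • (H + ε • 1)` positive
definite for some `δ > 0`, so `H + ε • 1 = δ⁻¹ • ((W + δ • (H + ε • 1)) - W)`, and `ε → 0⁺`
puts `H` in the closure.
-/

open Matrix Filter Topology Metric

theorem IsCompact.exists_pos_forall_add_mul_pos {X : Type*} [TopologicalSpace X] {K : Set X}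
    (hK : IsCompact K) {f g : X → ℝ} (hf : Continuous f) (hg : Continuous g)
    (hf_nonneg : ∀ x ∈ K, 0 ≤ f x) (hg_pos : ∀ x ∈ K, f x = 0 → 0 < g x) :
    ∃ δ > 0, ∀ x ∈ K, 0 < f x + δ * g x := by
  have hnear : ∀ᶠ δ in 𝓝 (0 : ℝ), ∀ x ∈ K, 0 < δ → x ∈ K → 0 < f x + δ * g x := by
    refine hK.eventually_forall_of_forall_eventually fun x hx => ?_
    rcases (hf_nonneg x hx).lt_or_eq with hfx | hfx
    · have hcont : Continuous fun p : ℝ × X => f p.2 + p.1 * g p.2 := by fun_prop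
      filter_upwards [hcont.continuousAt.eventually (lt_mem_nhds (by simpa using hfx))]
        with p hp _ _ using hp
    · filter_upwards [(hg.comp continuous_snd).continuousAt.eventually
        (lt_mem_nhds (hg_pos x hx hfx.symm))] with p hp hδ hpK
      exact add_pos_of_nonneg_of_pos (hf_nonneg _ hpK) (mul_pos hδ hp)
  obtain ⟨δ, hδ, hδpos⟩ :=
    ((hnear.filter_mono nhdsWithin_le_nhds).and (self_mem_nhdsWithin (s := Set.Ioi 0))).exists
  exact ⟨δ, hδpos, fun x hx => hδ x hx hδpos hx⟩

namespace Matrix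

variable {ι : Type*} [Fintype ι]

theorem posDef_of_dotProduct_mulVec_pos_of_mem_sphere {M : Matrix ι ι ℝ} (hM : M.IsHermitian)
    (hpos : ∀ x ∈ sphere (0 : ι → ℝ) 1, 0 < x ⬝ᵥ M *ᵥ x) : M.PosDef := by
  refine posDef_iff_dotProduct_mulVec.mpr ⟨hM, fun x hx => ?_⟩
  have hnorm : 0 < ‖x‖ := norm_pos_iff.mpr hx
  have hunit : ‖x‖⁻¹ • x ∈ sphere (0 : ι → ℝ) 1 := by
    simp [norm_smul, hnorm.ne']
  have hscale : x = ‖x‖ • (‖x‖⁻¹ • x) := by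
    rw [smul_smul, mul_inv_cancel₀ hnorm.ne', one_smul]
  rw [star_trivial, hscale, mulVec_smul, dotProduct_smul, smul_dotProduct, smul_eq_mul,
    smul_eq_mul]
  exact mul_pos hnorm (mul_pos hnorm (hpos _ hunit))

theorem PosSemidef.exists_posDef_add_smul {W A : Matrix ι ι ℝ} (hW : W.PosSemidef)
    (hA : A.IsHermitian) (hA_ker : ∀ u ≠ 0, W *ᵥ u = 0 → 0 < u ⬝ᵥ A *ᵥ u) :
    ∃ δ : ℝ, 0 < δ ∧ (W + δ • A).PosDef := by
  obtain ⟨δ, hδ, hpos⟩ := (isCompact_sphere (0 : ι → ℝ) 1).exists_pos_forall_add_mul_pos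
    (f := fun u => u ⬝ᵥ W *ᵥ u) (g := fun u => u ⬝ᵥ A *ᵥ u) (by fun_prop) (by fun_prop)
    (fun u _ => by simpa using hW.dotProduct_mulVec_nonneg u)
    (fun u hu hWu => hA_ker u (ne_zero_of_mem_unit_sphere ⟨u, hu⟩)
      ((hW.dotProduct_mulVec_zero_iff u).mp (by simpa using hWu)))
  refine ⟨δ, hδ, posDef_of_dotProduct_mulVec_pos_of_mem_sphere
    (hW.1.add (hA.smul (IsSelfAdjoint.all δ))) fun u hu => ?_⟩
  simpa [add_mulVec, smul_mulVec] using hpos u hu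

def psdRadialCone (W : Matrix ι ι ℝ) : Set (Matrix ι ι ℝ) :=
  {H | ∃ t : ℝ, 0 ≤ t ∧ ∃ S : Matrix ι ι ℝ, S.PosSemidef ∧ H = t • (S - W)}

def symmNonnegOnKer (W : Matrix ι ι ℝ) : Set (Matrix ι ι ℝ) :=
  {H | Hᵀ = H ∧ ∀ u : ι → ℝ, W *ᵥ u = 0 → 0 ≤ u ⬝ᵥ H *ᵥ u}

theorem isClosed_symmNonnegOnKer (W : Matrix ι ι ℝ) : IsClosed (symmNonnegOnKer W) := by
  simp only [symmNonnegOnKer, Set.ofPred_and, Set.ofPred_forall]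
  exact (isClosed_eq (by fun_prop) continuous_id).inter
    (isClosed_iInter fun u => isClosed_iInter fun _ => isClosed_le continuous_const (by fun_prop))

theorem psdRadialCone_subset_symmNonnegOnKer {W : Matrix ι ι ℝ} (hW : W.IsHermitian) :
    psdRadialCone W ⊆ symmNonnegOnKer W := by
  rintro _ ⟨t, ht, S, hS, rfl⟩
  refine ⟨?_, fun u hu => ?_⟩
  · rw [transpose_smul, transpose_sub, ← conjTranspose_eq_transpose_of_trivial,
      ← conjTranspose_eq_transpose_of_trivial, hS.1, hW]
  · rw [smul_mulVec, sub_mulVec, hu, sub_zero, dotProduct_smul, smul_eq_mul]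
    exact mul_nonneg ht (by simpa using hS.dotProduct_mulVec_nonneg u)

theorem add_smul_one_mem_psdRadialCone {W H : Matrix ι ι ℝ} [DecidableEq ι] (hW : W.PosSemidef)
    (hH : H ∈ symmNonnegOnKer W) {ε : ℝ} (hε : 0 < ε) : H + ε • 1 ∈ psdRadialCone W := by
  have hHerm : (H + ε • 1).IsHermitian := by
    refine IsHermitian.add ?_ (isHermitian_one.smul (IsSelfAdjoint.all ε))
    rw [IsHermitian, conjTranspose_eq_transpose_of_trivial, hH.1]
  have hker : ∀ u ≠ 0, W *ᵥ u = 0 → 0 < u ⬝ᵥ (H + ε • 1) *ᵥ u := by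
    intro u hu hWu
    rw [add_mulVec, smul_mulVec, dotProduct_add, dotProduct_smul, smul_eq_mul]
    exact add_pos_of_nonneg_of_pos (hH.2 u hWu)
      (mul_pos hε (by simpa using PosDef.one.dotProduct_mulVec_pos hu))
  obtain ⟨δ, hδ, hpos⟩ := hW.exists_posDef_add_smul hHerm hker
  refine ⟨δ⁻¹, (inv_pos.mpr hδ).le, _, hpos.posSemidef, ?_⟩
  rw [add_sub_cancel_left, smul_smul, inv_mul_cancel₀ hδ.ne', one_smul]

theorem symmNonnegOnKer_subset_closure_psdRadialCone {W : Matrix ι ι ℝ} [DecidableEq ι]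
    (hW : W.PosSemidef) : symmNonnegOnKer W ⊆ closure (psdRadialCone W) := by
  intro H hH
  have hlim : Tendsto (fun ε : ℝ => H + ε • (1 : Matrix ι ι ℝ)) (𝓝[>] 0) (𝓝 H) :=
    (Continuous.tendsto' (by fun_prop) 0 H (by simp)).mono_left nhdsWithin_le_nhds
  exact mem_closure_of_tendsto hlim
    (eventually_mem_nhdsWithin.mono fun ε hε => add_smul_one_mem_psdRadialCone hW hH hε)

end Matrix

/-- Tangent cone to the positive semidefinite cone: for `W` positive semidefinite,
the tangent cone (closure of `{t(S - W) : t ≥ 0, S PSD}`) to the PSD cone at `W`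
within the symmetric matrices is `{H symmetric : uᵀHu ≥ 0 for all u ∈ ker W}`. -/
theorem tangent_cone_psd (n : ℕ)
    (W : Matrix (Fin n) (Fin n) ℝ) (hW : W.PosSemidef) :
    closure {H : Matrix (Fin n) (Fin n) ℝ |
        ∃ t : ℝ, 0 ≤ t ∧ ∃ S : Matrix (Fin n) (Fin n) ℝ, S.PosSemidef ∧ H = t • (S - W)}
      = {H : Matrix (Fin n) (Fin n) ℝ | Hᵀ = H ∧
          ∀ u : Fin n → ℝ, W.mulVec u = 0 → 0 ≤ u ⬝ᵥ H.mulVec u} :=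
  (closure_minimal (psdRadialCone_subset_symmNonnegOnKer hW.1)
    (isClosed_symmNonnegOnKer W)).antisymm (symmNonnegOnKer_subset_closure_psdRadialCone hW)
end

section
/- (Strong duality for the sphere-constrained quadratic problem, case K = ℝⁿ.) Let d, n ≥ 1 and A ∈ ℝ^{d×n}. Then sup over v ∈ ℝ of inf{ (1/2)‖Ax‖₂² + v(‖x‖₂² − 1) : x ∈ ℝⁿ, ‖x‖₂ ≤ 1 } equals inf{ (1/2)‖Ax‖₂² : x ∈ ℝⁿ, ‖x‖₂ = 1 }, which is (1/2)·λ_min(AᵀA), one half the smallest eigenvalue of AᵀA. In particular, strong duality holds despite the nonconvex spherical constraint. -/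
/-!
For `G = AᵀA` and `μ = λ_min(G)`, expanding in an orthonormal eigenbasis of `G` gives
`‖Ax‖² = ⟪x, Gx⟫ ≥ μ‖x‖²`, with equality at a unit eigenvector for `μ`. Hence the sphere
minimum is `μ/2`. Every value of the dual function is at most `μ/2` (evaluate the Lagrangian at
that eigenvector), and for the multiplier `v = -μ/2` the Lagrangian
`½‖Ax‖² - (μ/2)(‖x‖² - 1) ≥ μ/2` attains `μ/2` there, so the dual supremum is `μ/2` as well.
-/

open Matrix

section SphereDuality

variable {E : Type*} [SeminormedAddGroup E] {f : E → ℝ} {c : ℝ}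

lemma isLeast_sphere_of_forall_le (hf : ∀ x, c * ‖x‖ ^ 2 ≤ f x) {x₀ : E} (hx₀ : ‖x₀‖ = 1)
    (hfx₀ : f x₀ = c) : IsLeast {s | ∃ x : E, ‖x‖ = 1 ∧ s = f x} c := by
  refine ⟨⟨x₀, hx₀, hfx₀.symm⟩, ?_⟩
  rintro s ⟨x, hx, rfl⟩
  simpa [hx] using hf x

lemma bddBelow_lagrangian (hf : ∀ x, c * ‖x‖ ^ 2 ≤ f x) (v : ℝ) :
    BddBelow {s | ∃ x : E, ‖x‖ ≤ 1 ∧ s = f x + v * (‖x‖ ^ 2 - 1)} := by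
  refine ⟨-|c + v| - v, ?_⟩
  rintro s ⟨x, hx, rfl⟩
  have hx2 : ‖x‖ ^ 2 ≤ 1 := pow_le_one₀ (norm_nonneg x) hx
  nlinarith [hf x, mul_nonneg (add_abs_nonneg (c + v)) (sq_nonneg ‖x‖),
    mul_nonneg (abs_nonneg (c + v)) (sub_nonneg.mpr hx2)]

lemma sInf_lagrangian_le (hf : ∀ x, c * ‖x‖ ^ 2 ≤ f x) {x₀ : E} (hx₀ : ‖x₀‖ = 1)
    (hfx₀ : f x₀ = c) (v : ℝ) :
    sInf {s | ∃ x : E, ‖x‖ ≤ 1 ∧ s = f x + v * (‖x‖ ^ 2 - 1)} ≤ c :=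
  csInf_le (bddBelow_lagrangian hf v) ⟨x₀, hx₀.le, by simp [hx₀, hfx₀]⟩

lemma isLeast_lagrangian_neg (hf : ∀ x, c * ‖x‖ ^ 2 ≤ f x) {x₀ : E} (hx₀ : ‖x₀‖ = 1)
    (hfx₀ : f x₀ = c) :
    IsLeast {s | ∃ x : E, ‖x‖ ≤ 1 ∧ s = f x + -c * (‖x‖ ^ 2 - 1)} c := by
  refine ⟨⟨x₀, hx₀.le, by simp [hx₀, hfx₀]⟩, ?_⟩
  rintro s ⟨x, -, rfl⟩
  linarith [hf x]

lemma isGreatest_lagrangeDual (hf : ∀ x, c * ‖x‖ ^ 2 ≤ f x) {x₀ : E} (hx₀ : ‖x₀‖ = 1)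
    (hfx₀ : f x₀ = c) :
    IsGreatest {r | ∃ v : ℝ, r = sInf {s | ∃ x : E, ‖x‖ ≤ 1 ∧ s = f x + v * (‖x‖ ^ 2 - 1)}} c := by
  refine ⟨⟨-c, (isLeast_lagrangian_neg hf hx₀ hfx₀).csInf_eq.symm⟩, ?_⟩
  rintro r ⟨v, rfl⟩
  exact sInf_lagrangian_le hf hx₀ hfx₀ v

end SphereDuality

namespace Matrix.IsHermitian

variable {𝕜 n : Type*} [RCLike 𝕜] [Fintype n] [DecidableEq n] {M : Matrix n n 𝕜}
  (hM : M.IsHermitian)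
include hM

lemma toEuclideanLin_eigenvectorBasis (j : n) :
    toEuclideanLin M (hM.eigenvectorBasis j) =
      (hM.eigenvalues j : 𝕜) • hM.eigenvectorBasis j := by
  rw [← RCLike.real_smul_eq_coe_smul]
  exact congrArg (WithLp.toLp 2) (hM.mulVec_eigenvectorBasis j)

lemma re_inner_toEuclideanLin_self (x : EuclideanSpace 𝕜 n) :
    RCLike.re (inner 𝕜 x (toEuclideanLin M x)) =
      ∑ j, hM.eigenvalues j * ‖inner 𝕜 (hM.eigenvectorBasis j) x‖ ^ 2 := by
  rw [← hM.eigenvectorBasis.sum_inner_mul_inner, map_sum]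
  refine Finset.sum_congr rfl fun j _ => ?_
  rw [← isSymmetric_toEuclideanLin_iff.mpr hM, toEuclideanLin_eigenvectorBasis,
    inner_smul_left, RCLike.conj_ofReal, mul_left_comm, ← inner_conj_symm x, RCLike.conj_mul,
    RCLike.re_ofReal_mul]
  norm_cast

lemma iInf_eigenvalues_mul_norm_sq_le (x : EuclideanSpace 𝕜 n) :
    (⨅ i, hM.eigenvalues i) * ‖x‖ ^ 2 ≤ RCLike.re (inner 𝕜 x (toEuclideanLin M x)) := by
  rw [hM.re_inner_toEuclideanLin_self, ← hM.eigenvectorBasis.sum_sq_norm_inner_right,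
    Finset.mul_sum]
  gcongr with j
  exact ciInf_le (Set.finite_range _).bddBelow j

lemma exists_norm_eq_one_re_inner_eq_iInf [Nonempty n] :
    ∃ x : EuclideanSpace 𝕜 n, ‖x‖ = 1 ∧
      RCLike.re (inner 𝕜 x (toEuclideanLin M x)) = ⨅ i, hM.eigenvalues i := by
  obtain ⟨i, hi⟩ := exists_eq_ciInf_of_finite (f := hM.eigenvalues)
  refine ⟨hM.eigenvectorBasis i, hM.eigenvectorBasis.orthonormal.1 i, ?_⟩
  rw [toEuclideanLin_eigenvectorBasis, inner_smul_right, inner_self_eq_norm_sq_to_K,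
    hM.eigenvectorBasis.orthonormal.1 i, hi]
  simp

end Matrix.IsHermitian

namespace Matrix

variable {𝕜 m n : Type*} [RCLike 𝕜] [Fintype m] [Fintype n] [DecidableEq m] [DecidableEq n]
  (A : Matrix m n 𝕜)

lemma norm_toEuclideanLin_sq (x : EuclideanSpace 𝕜 n) :
    ‖toEuclideanLin A x‖ ^ 2 = RCLike.re (inner 𝕜 x (toEuclideanLin (Aᴴ * A) x)) := by
  rw [toLpLin_mul_same, LinearMap.comp_apply, toEuclideanLin_conjTranspose_eq_adjoint,
    LinearMap.adjoint_inner_right, inner_self_eq_norm_sq]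

lemma iInf_eigenvalues_conjTranspose_mul_self_mul_norm_sq_le (x : EuclideanSpace 𝕜 n) :
    (⨅ i, (isHermitian_conjTranspose_mul_self A).eigenvalues i) * ‖x‖ ^ 2 ≤
      ‖toEuclideanLin A x‖ ^ 2 :=
  norm_toEuclideanLin_sq A x ▸
    (isHermitian_conjTranspose_mul_self A).iInf_eigenvalues_mul_norm_sq_le x

lemma exists_norm_eq_one_norm_toEuclideanLin_sq_eq_iInf [Nonempty n] :
    ∃ x : EuclideanSpace 𝕜 n, ‖x‖ = 1 ∧
      ‖toEuclideanLin A x‖ ^ 2 = ⨅ i, (isHermitian_conjTranspose_mul_self A).eigenvalues i := by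
  simpa only [norm_toEuclideanLin_sq] using
    (isHermitian_conjTranspose_mul_self A).exists_norm_eq_one_re_inner_eq_iInf

end Matrix

theorem strong_duality_sphere_general (d n : ℕ) (hn : 1 ≤ n)
    (A : Matrix (Fin d) (Fin n) ℝ) :
    sSup {r : ℝ | ∃ v : ℝ,
        r = sInf {s : ℝ | ∃ x : EuclideanSpace ℝ (Fin n), ‖x‖ ≤ 1 ∧
          s = (1 / 2) * ‖Matrix.toEuclideanLin A x‖ ^ 2 + v * (‖x‖ ^ 2 - 1)}}
      = sInf {s : ℝ | ∃ x : EuclideanSpace ℝ (Fin n), ‖x‖ = 1 ∧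
          s = (1 / 2) * ‖Matrix.toEuclideanLin A x‖ ^ 2} ∧
    sInf {s : ℝ | ∃ x : EuclideanSpace ℝ (Fin n), ‖x‖ = 1 ∧
          s = (1 / 2) * ‖Matrix.toEuclideanLin A x‖ ^ 2}
      = (1 / 2) * ⨅ i : Fin n, (Matrix.isHermitian_conjTranspose_mul_self A).eigenvalues i := by
  have : Nonempty (Fin n) := ⟨⟨0, hn⟩⟩
  have hf (x : EuclideanSpace ℝ (Fin n)) :
      1 / 2 * (⨅ i, (isHermitian_conjTranspose_mul_self A).eigenvalues i) * ‖x‖ ^ 2 ≤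
        1 / 2 * ‖toEuclideanLin A x‖ ^ 2 := by
    rw [mul_assoc]
    gcongr
    exact iInf_eigenvalues_conjTranspose_mul_self_mul_norm_sq_le A x
  obtain ⟨x₀, hx₀, hμ⟩ := exists_norm_eq_one_norm_toEuclideanLin_sq_eq_iInf A
  have hfx₀ := congrArg (1 / 2 * ·) hμ
  have hsphere := isLeast_sphere_of_forall_le hf hx₀ hfx₀
  exact ⟨(isGreatest_lagrangeDual hf hx₀ hfx₀).csSup_eq.trans hsphere.csInf_eq.symm,
    hsphere.csInf_eq⟩

/-- Strong duality for the sphere-constrained quadratic problem (case `K = ℝⁿ`):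
`sup_{v ∈ ℝ} inf{(1/2)‖Ax‖₂² + v(‖x‖₂² - 1) : ‖x‖₂ ≤ 1}`
equals `inf{(1/2)‖Ax‖₂² : ‖x‖₂ = 1}`, which is one half the smallest eigenvalue of
the Gram matrix `AᵀA`. -/
theorem strong_duality_sphere (d n : ℕ) (hd : 1 ≤ d) (hn : 1 ≤ n)
    (A : Matrix (Fin d) (Fin n) ℝ) :
    sSup {r : ℝ | ∃ v : ℝ,
        r = sInf {s : ℝ | ∃ x : EuclideanSpace ℝ (Fin n), ‖x‖ ≤ 1 ∧
          s = (1 / 2) * ‖Matrix.toEuclideanLin A x‖ ^ 2 + v * (‖x‖ ^ 2 - 1)}}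
      = sInf {s : ℝ | ∃ x : EuclideanSpace ℝ (Fin n), ‖x‖ = 1 ∧
          s = (1 / 2) * ‖Matrix.toEuclideanLin A x‖ ^ 2} ∧
    sInf {s : ℝ | ∃ x : EuclideanSpace ℝ (Fin n), ‖x‖ = 1 ∧
          s = (1 / 2) * ‖Matrix.toEuclideanLin A x‖ ^ 2}
      = (1 / 2) * ⨅ i : Fin n, (Matrix.isHermitian_conjTranspose_mul_self A).eigenvalues i :=
  strong_duality_sphere_general d n hn A
end
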